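/- arXiv:2204.07914 — 12 statements merged into one kernel-verified Lean document; each statement's English description precedes it below -/
import Mathlib

section
/- The quartic polynomial F^U(β) = G^U_0(β)G^U_1(β) − λ₀λ₁ has exactly four real roots, all distinct, of which exactly two are positive and two are negative. Moreover, denoting by β^U_A > β^U_B its two negative roots, one has β^U_B < ζ^{U,−}_i < β^U_A < 0 for i = 0,1; consequently G^U_0(β^U_A) < 0 and G^U_0(β^U_B) > 0. -/
open Polynomial in
lemma no_five_roots (a b c d e : ℝ) (ha : a ≠ 0) (x₁ x₂ x₃ x₄ x₅ : ℝ)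
    (h12 : x₁ ≠ x₂) (h13 : x₁ ≠ x₃) (h14 : x₁ ≠ x₄) (h15 : x₁ ≠ x₅)
    (h23 : x₂ ≠ x₃) (h24 : x₂ ≠ x₄) (h25 : x₂ ≠ x₅)
    (h34 : x₃ ≠ x₄) (h35 : x₃ ≠ x₅) (h45 : x₄ ≠ x₅)
    (H : ∀ x ∈ ({x₁, x₂, x₃, x₄, x₅} : Multiset ℝ),
        a*x^4 + b*x^3 + c*x^2 + d*x + e = 0) : False := by
  set P : ℝ[X] := C a * X^4 + C b * X^3 + C c * X^2 + C d * X + C e with hP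
  have hc : P.coeff 4 = a := by simp [hP, coeff_add, coeff_C_mul, coeff_X_pow, coeff_C]
  have hP0 : P ≠ 0 := fun h => ha (by rw [← hc, h, coeff_zero])
  have hdeg : P.natDegree ≤ 4 := by rw [hP]; compute_degree
  have heval : ∀ x, P.eval x = a*x^4 + b*x^3 + c*x^2 + d*x + e := by
    intro x; simp [hP]
  have hnodup : ({x₁, x₂, x₃, x₄, x₅} : Multiset ℝ).Nodup := by
    simp only [Multiset.insert_eq_cons, Multiset.nodup_cons, Multiset.mem_cons,
      Multiset.mem_singleton, Multiset.nodup_singleton]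
    tauto
  have hm : ({x₁, x₂, x₃, x₄, x₅} : Multiset ℝ) ≤ P.roots := by
    rw [Multiset.le_iff_subset hnodup]
    intro x hx
    rw [mem_roots hP0]
    exact (heval x).trans (H x hx)
  have := Multiset.card_le_card hm
  have h4 := P.card_roots'
  simp at this
  omega

lemma quad_growth (a b c K : ℝ) (ha : 0 < a) :
    ∃ M : ℝ, 0 < M ∧ ∀ x : ℝ, M ≤ |x| → K ≤ a*x^2 + b*x + c := by
  refine ⟨(|b| + |K| + |c|)/a + 1, by positivity, fun x hx => ?_⟩
  have h1 : 1 ≤ |x| := le_trans (le_add_of_nonneg_left (by positivity)) hx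
  have h2 : |b| + |K| + |c| + a ≤ a * |x| := by
    have := mul_le_mul_of_nonneg_left hx ha.le
    calc |b| + |K| + |c| + a = a * ((|b| + |K| + |c|)/a + 1) := by field_simp
    _ ≤ a * |x| := this
  nlinarith [le_abs_self b, neg_abs_le b, le_abs_self K, neg_abs_le c, le_abs_self c,
    sq_abs x, abs_nonneg x, neg_abs_le x, le_abs_self x, abs_nonneg b, abs_nonneg K, abs_nonneg c,
    mul_le_mul_of_nonneg_left h2 (abs_nonneg x)]

lemma quad_factor (a b c u v : ℝ) (huv : u ≠ v)
    (hu : a*u^2 + b*u + c = 0) (hv : a*v^2 + b*v + c = 0) :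
    ∀ x, a*x^2 + b*x + c = a*(x-u)*(x-v) := by
  have h1 : (u - v) * (a*(u+v) + b) = 0 := by linear_combination hu - hv
  have h2 : a*(u+v) + b = 0 := by
    rcases mul_eq_zero.1 h1 with h | h
    · exact absurd (sub_eq_zero.1 h) huv
    · exact h
  have hb : b = -a*(u+v) := by linarith
  rw [hb] at hu
  have hc : c = a*u*v := by linear_combination hu
  intro x; rw [hb, hc]; ring

lemma prod_big (K u v p : ℝ) (hK0 : 0 < K) (hKK : p < K*K) (hu : K ≤ u) (hv : K ≤ v) :
    0 < u*v - p := by nlinarith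

lemma F0pos (l₀ l₁ r η : ℝ) (hl₀ : 0 < l₀) (hl₁ : 0 < l₁) (hr : 0 < r) (hη : 0 < η) :
    0 < -(l₀+r) * -(l₁+r+η) - l₀*l₁ := by nlinarith

/-- The quartic `F^U(β) = G^U_0(β) G^U_1(β) - λ₀λ₁` has exactly four real
roots, all distinct, two positive and two negative; its two negative roots
`β^U_A > β^U_B` satisfy `β^U_B < ζ^{U,-}_i < β^U_A < 0` for `i = 0,1`, whence
`G^U_0(β^U_A) < 0` and `G^U_0(β^U_B) > 0`. -/
theorem quartic_FU_roots
    (r μ₀ μ₁ σ₀ σ₁ l₀ l₁ η : ℝ)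
    (hσ₀ : 0 < σ₀) (hσ₁ : 0 < σ₁) (hl₀ : 0 < l₀) (hl₁ : 0 < l₁)
    (hη : 0 < η) (hr : 0 < r) (hrμ : max μ₀ μ₁ < r)
    (G₀ G₁ : ℝ → ℝ)
    (hG₀ : ∀ β, G₀ β = (1/2) * σ₀^2 * β * (β - 1) + μ₀ * β - (l₀ + r))
    (hG₁ : ∀ β, G₁ β = (1/2) * σ₁^2 * β * (β - 1) + μ₁ * β - (l₁ + r + η))
    (F : ℝ → ℝ) (hF : ∀ β, F β = G₀ β * G₁ β - l₀ * l₁)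
    (ζ₀ ζ₁ : ℝ)
    (hζ₀ : ζ₀ < 0 ∧ G₀ ζ₀ = 0 ∧ ∀ x, x < 0 → G₀ x = 0 → x = ζ₀)
    (hζ₁ : ζ₁ < 0 ∧ G₁ ζ₁ = 0 ∧ ∀ x, x < 0 → G₁ x = 0 → x = ζ₁) :
    ∃ βB βA β₃ β₄ : ℝ,
      βB < βA ∧ βA < 0 ∧ 0 < β₃ ∧ β₃ < β₄ ∧
      (∀ β, F β = 0 ↔ (β = βB ∨ β = βA ∨ β = β₃ ∨ β = β₄)) ∧
      βB < ζ₀ ∧ βB < ζ₁ ∧ ζ₀ < βA ∧ ζ₁ < βA ∧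
      G₀ βA < 0 ∧ 0 < G₀ βB := by
  obtain ⟨hζ₀neg, hζ₀root, -⟩ := hζ₀
  obtain ⟨hζ₁neg, hζ₁root, -⟩ := hζ₁
  have ha₀ : (0:ℝ) < σ₀^2/2 := by positivity
  have ha₁ : (0:ℝ) < σ₁^2/2 := by positivity
  have hG₀e : ∀ x, G₀ x = σ₀^2/2*x^2 + (μ₀-σ₀^2/2)*x + (-(l₀+r)) := fun x => by
    rw [hG₀]; ring
  have hG₁e : ∀ x, G₁ x = σ₁^2/2*x^2 + (μ₁-σ₁^2/2)*x + (-(l₁+r+η)) := fun x => by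
    rw [hG₁]; ring
  have hG₀c : Continuous G₀ := by
    have : G₀ = fun x => σ₀^2/2*x^2 + (μ₀-σ₀^2/2)*x + (-(l₀+r)) := funext hG₀e
    rw [this]; fun_prop
  have hG₁c : Continuous G₁ := by
    have : G₁ = fun x => σ₁^2/2*x^2 + (μ₁-σ₁^2/2)*x + (-(l₁+r+η)) := funext hG₁e
    rw [this]; fun_prop
  have hFc : Continuous F := by
    have : F = fun x => G₀ x * G₁ x - l₀*l₁ := funext hF
    rw [this]; fun_prop
  set K : ℝ := max 1 (l₀*l₁+1) with hKdef
  have hK1 : (1:ℝ) ≤ K := le_max_left _ _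
  have hK2 : l₀*l₁+1 ≤ K := le_max_right _ _
  have hK0 : (0:ℝ) < K := lt_of_lt_of_le one_pos hK1
  have hKK : l₀*l₁ < K*K := by nlinarith
  obtain ⟨M₀, hM₀pos, hM₀⟩ := quad_growth (σ₀^2/2) (μ₀-σ₀^2/2) (-(l₀+r)) K ha₀
  obtain ⟨M₁, hM₁pos, hM₁⟩ := quad_growth (σ₁^2/2) (μ₁-σ₁^2/2) (-(l₁+r+η)) K ha₁
  have hG₀big : ∀ x, M₀ ≤ |x| → K ≤ G₀ x := fun x hx => by rw [hG₀e]; exact hM₀ x hx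
  have hG₁big : ∀ x, M₁ ≤ |x| → K ≤ G₁ x := fun x hx => by rw [hG₁e]; exact hM₁ x hx
  -- G values at 0
  have h00 : G₀ 0 = -(l₀+r) := by rw [hG₀]; ring
  have h01 : G₁ 0 = -(l₁+r+η) := by rw [hG₁]; ring
  have hG₀0 : G₀ 0 < 0 := by rw [h00]; linarith
  have hG₁0 : G₁ 0 < 0 := by rw [h01]; linarith
  -- positive roots p₀ p₁
  have hG₀M : 0 < G₀ M₀ := lt_of_lt_of_le hK0 (hG₀big M₀ (by rw [abs_of_pos hM₀pos]))
  have hG₁M : 0 < G₁ M₁ := lt_of_lt_of_le hK0 (hG₁big M₁ (by rw [abs_of_pos hM₁pos]))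
  obtain ⟨p₀, hp₀mem, hp₀root⟩ := intermediate_value_Ioo hM₀pos.le hG₀c.continuousOn
    (show (0:ℝ) ∈ Set.Ioo (G₀ 0) (G₀ M₀) from ⟨hG₀0, hG₀M⟩)
  obtain ⟨p₁, hp₁mem, hp₁root⟩ := intermediate_value_Ioo hM₁pos.le hG₁c.continuousOn
    (show (0:ℝ) ∈ Set.Ioo (G₁ 0) (G₁ M₁) from ⟨hG₁0, hG₁M⟩)
  obtain ⟨hp₀pos, hp₀M⟩ := hp₀mem
  obtain ⟨hp₁pos, hp₁M⟩ := hp₁mem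
  -- F values
  have hF0 : 0 < F 0 := by
    rw [hF, h00, h01]; exact F0pos l₀ l₁ r η hl₀ hl₁ hr hη
  have hFζ₀ : F ζ₀ < 0 := by
    rw [hF, hζ₀root]; simp only [zero_mul, mul_zero, zero_sub]; exact neg_lt_zero.mpr (by positivity)
  have hFζ₁ : F ζ₁ < 0 := by
    rw [hF, hζ₁root]; simp only [zero_mul, mul_zero, zero_sub]; exact neg_lt_zero.mpr (by positivity)
  have hFp₀ : F p₀ < 0 := by
    rw [hF, hp₀root]; simp only [zero_mul, mul_zero, zero_sub]; exact neg_lt_zero.mpr (by positivity)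
  have hFp₁ : F p₁ < 0 := by
    rw [hF, hp₁root]; simp only [zero_mul, mul_zero, zero_sub]; exact neg_lt_zero.mpr (by positivity)
  have hFmζ : F (min ζ₀ ζ₁) < 0 := by rcases min_cases ζ₀ ζ₁ with ⟨h, -⟩ | ⟨h, -⟩ <;> rw [h] <;> assumption
  have hFMζ : F (max ζ₀ ζ₁) < 0 := by rcases max_cases ζ₀ ζ₁ with ⟨h, -⟩ | ⟨h, -⟩ <;> rw [h] <;> assumption
  have hFmp : F (min p₀ p₁) < 0 := by rcases min_cases p₀ p₁ with ⟨h, -⟩ | ⟨h, -⟩ <;> rw [h] <;> assumption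
  have hFMp : F (max p₀ p₁) < 0 := by rcases max_cases p₀ p₁ with ⟨h, -⟩ | ⟨h, -⟩ <;> rw [h] <;> assumption
  -- far left point L and far right point R
  set L : ℝ := min (-(max M₀ M₁)) (min ζ₀ ζ₁ - 1) with hLdef
  have hLζ : L < min ζ₀ ζ₁ := lt_of_le_of_lt (min_le_right _ _) (by linarith [min_le_left ζ₀ ζ₁])
  have hLneg : L ≤ -(max M₀ M₁) := min_le_left _ _
  have hLabs₀ : M₀ ≤ |L| := by
    rw [abs_of_neg (by linarith [le_max_left M₀ M₁, lt_of_le_of_lt hLneg (by linarith [le_max_left M₀ M₁] : -(max M₀ M₁) < 0)] : L < 0)]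
    linarith [le_max_left M₀ M₁]
  have hLabs₁ : M₁ ≤ |L| := by
    rw [abs_of_neg (by linarith [le_max_left M₀ M₁, lt_of_le_of_lt hLneg (by linarith [le_max_left M₀ M₁] : -(max M₀ M₁) < 0)] : L < 0)]
    linarith [le_max_right M₀ M₁]
  have hFL : 0 < F L := by
    have h0 := hG₀big L hLabs₀
    have h1 := hG₁big L hLabs₁
    rw [hF]; exact prod_big K _ _ _ hK0 hKK h0 h1
  set R : ℝ := max M₀ M₁ + 1 with hRdef
  have hRpos : 0 < R := by have := le_max_left M₀ M₁; simp only [hRdef]; linarith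
  have hRabs₀ : M₀ ≤ |R| := by rw [abs_of_pos hRpos]; have := le_max_left M₀ M₁; linarith
  have hRabs₁ : M₁ ≤ |R| := by rw [abs_of_pos hRpos]; have := le_max_right M₀ M₁; linarith
  have hFR : 0 < F R := by
    have h0 := hG₀big R hRabs₀
    have h1 := hG₁big R hRabs₁
    rw [hF]; exact prod_big K _ _ _ hK0 hKK h0 h1
  have hMpR : max p₀ p₁ < R := by
    rcases max_cases p₀ p₁ with ⟨h, -⟩ | ⟨h, -⟩ <;> rw [h]
    · have := le_max_left M₀ M₁; linarith
    · have := le_max_right M₀ M₁; linarith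
  -- the four roots
  obtain ⟨βB, hβBmem, hβBroot⟩ := intermediate_value_Ioo' hLζ.le hFc.continuousOn
    (show (0:ℝ) ∈ Set.Ioo (F (min ζ₀ ζ₁)) (F L) from ⟨hFmζ, hFL⟩)
  have hMζ0 : max ζ₀ ζ₁ ≤ 0 := by rcases max_cases ζ₀ ζ₁ with ⟨h, -⟩ | ⟨h, -⟩ <;> rw [h] <;> linarith
  obtain ⟨βA, hβAmem, hβAroot⟩ := intermediate_value_Ioo hMζ0 hFc.continuousOn
    (show (0:ℝ) ∈ Set.Ioo (F (max ζ₀ ζ₁)) (F 0) from ⟨hFMζ, hF0⟩)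
  have hmp0 : (0:ℝ) ≤ min p₀ p₁ := by rcases min_cases p₀ p₁ with ⟨h, -⟩ | ⟨h, -⟩ <;> rw [h] <;> linarith
  obtain ⟨β₃, hβ₃mem, hβ₃root⟩ := intermediate_value_Ioo' hmp0 hFc.continuousOn
    (show (0:ℝ) ∈ Set.Ioo (F (min p₀ p₁)) (F 0) from ⟨hFmp, hF0⟩)
  obtain ⟨β₄, hβ₄mem, hβ₄root⟩ := intermediate_value_Ioo hMpR.le hFc.continuousOn
    (show (0:ℝ) ∈ Set.Ioo (F (max p₀ p₁)) (F R) from ⟨hFMp, hFR⟩)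
  obtain ⟨hβBL, hβBζ⟩ := hβBmem
  obtain ⟨hβAζ, hβA0⟩ := hβAmem
  obtain ⟨hβ₃0, hβ₃p⟩ := hβ₃mem
  obtain ⟨hβ₄p, hβ₄R⟩ := hβ₄mem
  -- orderings
  have hmina : min ζ₀ ζ₁ ≤ max ζ₀ ζ₁ := min_le_max
  have hBA : βB < βA := lt_of_lt_of_le hβBζ (le_trans hmina hβAζ.le)
  have h34 : β₃ < β₄ := lt_of_lt_of_le hβ₃p (le_trans min_le_max hβ₄p.le)
  have hBζ₀ : βB < ζ₀ := lt_of_lt_of_le hβBζ (min_le_left _ _)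
  have hBζ₁ : βB < ζ₁ := lt_of_lt_of_le hβBζ (min_le_right _ _)
  have hζ₀A : ζ₀ < βA := lt_of_le_of_lt (le_max_left ζ₀ ζ₁) hβAζ
  have hζ₁A : ζ₁ < βA := lt_of_le_of_lt (le_max_right ζ₀ ζ₁) hβAζ
  have hβ₃p₀ : β₃ < p₀ := lt_of_lt_of_le hβ₃p (min_le_left _ _)
  -- factorization of G₀ and sign conclusions
  have hfac := quad_factor (σ₀^2/2) (μ₀-σ₀^2/2) (-(l₀+r)) ζ₀ p₀ (ne_of_lt (by linarith))
    (by rw [← hG₀e]; exact hζ₀root) (by rw [← hG₀e]; exact hp₀root)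
  have hG₀A : G₀ βA < 0 := by
    rw [hG₀e, hfac βA]
    have h1 : 0 < βA - ζ₀ := by linarith
    have h2 : βA - p₀ < 0 := by linarith
    exact mul_neg_of_pos_of_neg (mul_pos ha₀ h1) h2
  have hG₀B : 0 < G₀ βB := by
    rw [hG₀e, hfac βB]
    have h1 : βB - ζ₀ < 0 := by linarith
    have h2 : βB - p₀ < 0 := by linarith
    exact mul_pos_of_neg_of_neg (mul_neg_of_pos_of_neg ha₀ h1) h2
  -- quartic expansion
  have hFq : ∀ x, F x = ((σ₀^2/2)*(σ₁^2/2))*x^4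
      + ((σ₀^2/2)*(μ₁-σ₁^2/2) + (μ₀-σ₀^2/2)*(σ₁^2/2))*x^3
      + ((σ₀^2/2)*(-(l₁+r+η)) + (μ₀-σ₀^2/2)*(μ₁-σ₁^2/2) + (-(l₀+r))*(σ₁^2/2))*x^2
      + ((μ₀-σ₀^2/2)*(-(l₁+r+η)) + (-(l₀+r))*(μ₁-σ₁^2/2))*x
      + ((-(l₀+r))*(-(l₁+r+η)) - l₀*l₁) := fun x => by
    rw [hF, hG₀, hG₁]; ring
  refine ⟨βB, βA, β₃, β₄, hBA, hβA0, hβ₃0, h34, ?_, hBζ₀, hBζ₁, hζ₀A, hζ₁A, hG₀A, hG₀B⟩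
  intro β
  constructor
  · intro hβroot
    by_contra hcon
    push_neg at hcon
    obtain ⟨hne1, hne2, hne3, hne4⟩ := hcon
    have hA0 : βA < β₃ := by linarith
    exact no_five_roots ((σ₀^2/2)*(σ₁^2/2))
      ((σ₀^2/2)*(μ₁-σ₁^2/2) + (μ₀-σ₀^2/2)*(σ₁^2/2))
      ((σ₀^2/2)*(-(l₁+r+η)) + (μ₀-σ₀^2/2)*(μ₁-σ₁^2/2) + (-(l₀+r))*(σ₁^2/2))
      ((μ₀-σ₀^2/2)*(-(l₁+r+η)) + (-(l₀+r))*(μ₁-σ₁^2/2))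
      ((-(l₀+r))*(-(l₁+r+η)) - l₀*l₁) (by positivity) β βB βA β₃ β₄
      hne1 hne2 hne3 hne4 (ne_of_lt hBA) (ne_of_lt (by linarith)) (ne_of_lt (by linarith))
      (ne_of_lt (by linarith)) (ne_of_lt (by linarith)) (ne_of_lt h34)
      (by
        intro x hx
        simp only [Multiset.insert_eq_cons, Multiset.mem_cons, Multiset.mem_singleton] at hx
        rcases hx with rfl | rfl | rfl | rfl | rfl
        · rw [← hFq]; exact hβroot
        · rw [← hFq]; exact hβBroot
        · rw [← hFq]; exact hβAroot
        · rw [← hFq]; exact hβ₃root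
        · rw [← hFq]; exact hβ₄root)
  · rintro (rfl | rfl | rfl | rfl)
    · exact hβBroot
    · exact hβAroot
    · exact hβ₃root
    · exact hβ₄root
end

section
/- The affine functions f₀(x) = a₀x + b₀ and f₁(x) = a₁x + b₁ satisfy, for every x > 0, the coupled equations −r f₀(x) + μ₀x f₀′(x) + (1/2)σ₀²x² f₀″(x) + λ₀(f₁(x) − f₀(x)) = 0 and −r f₁(x) + μ₁x f₁′(x) + (1/2)σ₁²x² f₁″(x) + λ₁(f₀(x) − f₁(x)) + η(π̃(x) − f₁(x)) = 0, where π̃(x) = αx − αK̃. -/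
/-- The affine functions `f₀(x) = a₀x + b₀` and `f₁(x) = a₁x + b₁`
solve the coupled inhomogeneous ODE system with source `π̃(x) = αx - αK̃`. -/
theorem affine_special_solution
    (r μ₀ μ₁ σ₀ σ₁ l₀ l₁ η : ℝ)
    (hσ₀ : 0 < σ₀) (hσ₁ : 0 < σ₁) (hl₀ : 0 < l₀) (hl₁ : 0 < l₁)
    (hη : 0 < η) (hr : 0 < r) (hrμ : max μ₀ μ₁ < r)
    (α K I : ℝ) (hα : 0 < α) (hK : 0 ≤ K) (hI : 0 ≤ I) (hKI : 0 < K + I)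
    (Kt : ℝ) (hKt : Kt = K + I / α)
    (a₀ a₁ b₀ b₁ : ℝ)
    (ha₀ : a₀ = α * η * l₀ / ((r - μ₀ + l₀) * (r - μ₁ + l₁ + η) - l₀ * l₁))
    (ha₁ : a₁ = α * η * (r - μ₀ + l₀) / ((r - μ₀ + l₀) * (r - μ₁ + l₁ + η) - l₀ * l₁))
    (hb₀ : b₀ = α * Kt * η * l₀ / (l₀ * l₁ - (r + l₀) * (r + l₁ + η)))
    (hb₁ : b₁ = α * Kt * η * (r + l₀) / (l₀ * l₁ - (r + l₀) * (r + l₁ + η))) :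
    ∀ x : ℝ, 0 < x →
      (-r * (a₀ * x + b₀) + μ₀ * x * deriv (fun y => a₀ * y + b₀) x
        + (1/2) * σ₀^2 * x^2 * deriv (deriv (fun y => a₀ * y + b₀)) x
        + l₀ * ((a₁ * x + b₁) - (a₀ * x + b₀)) = 0) ∧
      (-r * (a₁ * x + b₁) + μ₁ * x * deriv (fun y => a₁ * y + b₁) x
        + (1/2) * σ₁^2 * x^2 * deriv (deriv (fun y => a₁ * y + b₁)) x
        + l₁ * ((a₀ * x + b₀) - (a₁ * x + b₁))
        + η * ((α * x - α * Kt) - (a₁ * x + b₁)) = 0) := by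

  have hD1 : (r - μ₀ + l₀) * (r - μ₁ + l₁ + η) - l₀ * l₁ ≠ 0 := by
    have h0 : μ₀ < r := lt_of_le_of_lt (le_max_left _ _) hrμ
    have h1 : μ₁ < r := lt_of_le_of_lt (le_max_right _ _) hrμ
    nlinarith
  have hD2 : l₀ * l₁ - (r + l₀) * (r + l₁ + η) ≠ 0 := by nlinarith
  have hd : ∀ a b : ℝ, deriv (fun y : ℝ => a * y + b) = fun _ => a := by
    intro a b; funext y
    simpa using ((hasDerivAt_id y).const_mul a).add_const b |>.deriv
  have c1 : μ₀ * a₀ - r * a₀ + l₀ * (a₁ - a₀) = 0 := by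
    rw [ha₀, ha₁]; field_simp; ring
  have c2 : -r * b₀ + l₀ * (b₁ - b₀) = 0 := by
    rw [hb₀, hb₁]; field_simp; ring
  have c3 : μ₁ * a₁ - r * a₁ + l₁ * (a₀ - a₁) + η * (α - a₁) = 0 := by
    rw [ha₀, ha₁]; field_simp; ring
  have c4 : -r * b₁ + l₁ * (b₀ - b₁) + η * (-(α * Kt) - b₁) = 0 := by
    rw [hb₀, hb₁]; field_simp; ring
  intro x hx
  rw [hd, hd, show (deriv (fun _ : ℝ => a₀) : ℝ → ℝ) = fun _ => 0 from funext fun _ => deriv_const _ _,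
      show (deriv (fun _ : ℝ => a₁) : ℝ → ℝ) = fun _ => 0 from funext fun _ => deriv_const _ _]
  constructor
  · linear_combination x * c1 + c2
  · linear_combination x * c3 + c4
end

section
/- Let β ∈ ℝ satisfy F^L(β) = 0; then G^L_0(β) ≠ 0, and for any A₁ ∈ ℝ, setting A₀ = −λ₀A₁/G^L_0(β) and f_i(x) = A_i x^β for x > 0 (i = 0,1), the functions f₀, f₁ satisfy, for every x > 0, −r f₀(x) + μ₀x f₀′(x) + (1/2)σ₀²x² f₀″(x) + λ₀(f₁(x) − f₀(x)) = 0 and −r f₁(x) + μ₁x f₁′(x) + (1/2)σ₁²x² f₁″(x) + λ₁(f₀(x) − f₁(x)) = 0. -/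
lemma deriv_const_rpow_L (c β : ℝ) {x : ℝ} (hx : 0 < x) :
    deriv (fun y : ℝ => c * y ^ β) x = c * β * x ^ (β - 1) := by
  have h : HasDerivAt (fun y : ℝ => c * y ^ β) (c * (β * x ^ (β - 1))) x :=
    (Real.hasDerivAt_rpow_const (Or.inl hx.ne')).const_mul c
  rw [h.deriv]; ring

lemma deriv2_const_rpow (c β : ℝ) {x : ℝ} (hx : 0 < x) :
    deriv (deriv (fun y : ℝ => c * y ^ β)) x = c * β * (β - 1) * x ^ (β - 2) := by
  have hev : deriv (fun y : ℝ => c * y ^ β) =ᶠ[nhds x]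
      (fun y : ℝ => c * β * y ^ (β - 1)) := by
    filter_upwards [IsOpen.mem_nhds isOpen_Ioi hx] with y hy
    exact deriv_const_rpow_L c β hy
  rw [hev.deriv_eq, deriv_const_rpow_L (c * β) (β - 1) hx]
  ring_nf

/-- If `F^L(β) = 0` then `G^L_0(β) ≠ 0`, and for any `A₁`, setting
`A₀ = -λ₀A₁/G^L_0(β)` and `f_i(x) = A_i x^β`, the pair `(f₀, f₁)` solves the
homogeneous coupled ODE system on `(0,∞)`. -/
theorem power_solution_L
    (r μ₀ μ₁ σ₀ σ₁ l₀ l₁ : ℝ)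
    (hσ₀ : 0 < σ₀) (hσ₁ : 0 < σ₁) (hl₀ : 0 < l₀) (hl₁ : 0 < l₁) (hr : 0 < r)
    (G₀ G₁ : ℝ → ℝ)
    (hG₀ : ∀ β, G₀ β = (1/2) * σ₀^2 * β * (β - 1) + μ₀ * β - (l₀ + r))
    (hG₁ : ∀ β, G₁ β = (1/2) * σ₁^2 * β * (β - 1) + μ₁ * β - (l₁ + r))
    (F : ℝ → ℝ) (hF : ∀ β, F β = G₀ β * G₁ β - l₀ * l₁)
    (β : ℝ) (hβ : F β = 0) (A₁ : ℝ) :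
    G₀ β ≠ 0 ∧
    ∀ x : ℝ, 0 < x →
      (-r * ((-l₀ * A₁ / G₀ β) * x ^ β)
        + μ₀ * x * deriv (fun y : ℝ => (-l₀ * A₁ / G₀ β) * y ^ β) x
        + (1/2) * σ₀^2 * x^2 * deriv (deriv (fun y : ℝ => (-l₀ * A₁ / G₀ β) * y ^ β)) x
        + l₀ * (A₁ * x ^ β - (-l₀ * A₁ / G₀ β) * x ^ β) = 0) ∧
      (-r * (A₁ * x ^ β)
        + μ₁ * x * deriv (fun y : ℝ => A₁ * y ^ β) x
        + (1/2) * σ₁^2 * x^2 * deriv (deriv (fun y : ℝ => A₁ * y ^ β)) x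
        + l₁ * ((-l₀ * A₁ / G₀ β) * x ^ β - A₁ * x ^ β) = 0) := by
  have hprod : G₀ β * G₁ β = l₀ * l₁ := by
    have := hF β; rw [hβ] at this; linarith
  have hG0ne : G₀ β ≠ 0 := by
    intro h
    rw [h, zero_mul] at hprod
    nlinarith
  refine ⟨hG0ne, fun x hx => ?_⟩
  have hxne : x ≠ 0 := hx.ne'
  have h1 : x ^ (β - 1) = x ^ β / x := by
    rw [Real.rpow_sub hx, Real.rpow_one]
  have h2 : x ^ (β - 2) = x ^ β / x ^ 2 := by
    rw [Real.rpow_sub hx, Real.rpow_two]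
  constructor
  · rw [deriv_const_rpow_L _ β hx, deriv2_const_rpow _ β hx, h1, h2]
    field_simp
    linear_combination (2 * l₀ * A₁ * x ^ β) * hG₀ β
  · rw [deriv_const_rpow_L _ β hx, deriv2_const_rpow _ β hx, h1, h2]
    field_simp
    linear_combination (2 * A₁ * x ^ β * G₀ β) * (hG₁ β).symm
      + (2 * A₁ * x ^ β) * hprod
end

section
/- Let β ∈ ℝ satisfy F^U(β) = 0; then G^U_0(β) ≠ 0, and for any A₁ ∈ ℝ, setting A₀ = −λ₀A₁/G^U_0(β) and f_i(x) = A_i x^β for x > 0 (i = 0,1), the functions f₀, f₁ satisfy, for every x > 0, −r f₀(x) + μ₀x f₀′(x) + (1/2)σ₀²x² f₀″(x) + λ₀(f₁(x) − f₀(x)) = 0 and −r f₁(x) + μ₁x f₁′(x) + (1/2)σ₁²x² f₁″(x) + λ₁(f₀(x) − f₁(x)) − η f₁(x) = 0. -/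
lemma deriv_const_mul_rpow (A β x : ℝ) (hx : 0 < x) :
    deriv (fun y : ℝ => A * y ^ β) x = A * β * x ^ (β - 1) := by
  have h : HasDerivAt (fun y : ℝ => A * y ^ β) (A * (β * x ^ (β - 1))) x :=
    (Real.hasDerivAt_rpow_const (Or.inl hx.ne')).const_mul A
  rw [h.deriv]; ring

lemma deriv2_const_mul_rpow (A β x : ℝ) (hx : 0 < x) :
    deriv (deriv (fun y : ℝ => A * y ^ β)) x = A * β * (β - 1) * x ^ (β - 2) := by
  have hev : deriv (fun y : ℝ => A * y ^ β) =ᶠ[nhds x]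
      (fun y : ℝ => (A * β) * y ^ (β - 1)) := by
    filter_upwards [eventually_gt_nhds hx] with y hy
    rw [deriv_const_mul_rpow A β y hy]
  rw [Filter.EventuallyEq.deriv_eq hev, deriv_const_mul_rpow (A * β) (β - 1) x hx,
    show β - 1 - 1 = β - 2 by ring]

/-- If `F^U(β) = 0` then `G^U_0(β) ≠ 0`, and for any `A₁`, setting
`A₀ = -λ₀A₁/G^U_0(β)` and `f_i(x) = A_i x^β`, the pair `(f₀, f₁)` solves the
coupled ODE system (with killing rate `η` in the second equation) on `(0,∞)`. -/
theorem power_solution_U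
    (r μ₀ μ₁ σ₀ σ₁ l₀ l₁ η : ℝ)
    (hσ₀ : 0 < σ₀) (hσ₁ : 0 < σ₁) (hl₀ : 0 < l₀) (hl₁ : 0 < l₁)
    (hη : 0 < η) (hr : 0 < r)
    (G₀ G₁ : ℝ → ℝ)
    (hG₀ : ∀ β, G₀ β = (1/2) * σ₀^2 * β * (β - 1) + μ₀ * β - (l₀ + r))
    (hG₁ : ∀ β, G₁ β = (1/2) * σ₁^2 * β * (β - 1) + μ₁ * β - (l₁ + r + η))
    (F : ℝ → ℝ) (hF : ∀ β, F β = G₀ β * G₁ β - l₀ * l₁)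
    (β : ℝ) (hβ : F β = 0) (A₁ : ℝ) :
    G₀ β ≠ 0 ∧
    ∀ x : ℝ, 0 < x →
      (-r * ((-l₀ * A₁ / G₀ β) * x ^ β)
        + μ₀ * x * deriv (fun y : ℝ => (-l₀ * A₁ / G₀ β) * y ^ β) x
        + (1/2) * σ₀^2 * x^2 * deriv (deriv (fun y : ℝ => (-l₀ * A₁ / G₀ β) * y ^ β)) x
        + l₀ * (A₁ * x ^ β - (-l₀ * A₁ / G₀ β) * x ^ β) = 0) ∧
      (-r * (A₁ * x ^ β)
        + μ₁ * x * deriv (fun y : ℝ => A₁ * y ^ β) x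
        + (1/2) * σ₁^2 * x^2 * deriv (deriv (fun y : ℝ => A₁ * y ^ β)) x
        + l₁ * ((-l₀ * A₁ / G₀ β) * x ^ β - A₁ * x ^ β)
        - η * (A₁ * x ^ β) = 0) := by
  have hFβ : G₀ β * G₁ β = l₀ * l₁ := by
    have := hF β; rw [hβ] at this; linarith
  have hG0ne : G₀ β ≠ 0 := by
    intro h
    rw [h, zero_mul] at hFβ
    exact absurd hFβ.symm (ne_of_gt (mul_pos hl₀ hl₁))
  refine ⟨hG0ne, fun x hx => ?_⟩
  set A₀ : ℝ := -l₀ * A₁ / G₀ β with hA₀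
  have key0 : A₀ * G₀ β + l₀ * A₁ = 0 := by
    rw [hA₀, div_mul_cancel₀ _ hG0ne]; ring
  have key1 : A₁ * G₁ β + l₁ * A₀ = 0 := by
    rw [hA₀]
    field_simp
    linear_combination A₁ * hFβ
  have hx1 : x ^ (β - 1) * x = x ^ β := by
    nth_rewrite 2 [← Real.rpow_one x]
    rw [← Real.rpow_add hx]; norm_num
  have hx2 : x ^ (β - 2) * x ^ (2:ℕ) = x ^ β := by
    rw [← Real.rpow_natCast x 2, ← Real.rpow_add hx]; norm_num
  constructor
  · rw [deriv_const_mul_rpow _ _ _ hx, deriv2_const_mul_rpow _ _ _ hx]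
    have e : -r * (A₀ * x ^ β) + μ₀ * x * (A₀ * β * x ^ (β - 1))
        + 1 / 2 * σ₀ ^ 2 * x ^ 2 * (A₀ * β * (β - 1) * x ^ (β - 2))
        + l₀ * (A₁ * x ^ β - A₀ * x ^ β)
        = (A₀ * G₀ β + l₀ * A₁) * x ^ β := by
      rw [hG₀]
      linear_combination (μ₀ * A₀ * β) * hx1 + (1/2 * σ₀^2 * A₀ * β * (β-1)) * hx2
    rw [e, key0, zero_mul]
  · rw [deriv_const_mul_rpow _ _ _ hx, deriv2_const_mul_rpow _ _ _ hx]
    have e : -r * (A₁ * x ^ β) + μ₁ * x * (A₁ * β * x ^ (β - 1))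
        + 1 / 2 * σ₁ ^ 2 * x ^ 2 * (A₁ * β * (β - 1) * x ^ (β - 2))
        + l₁ * (A₀ * x ^ β - A₁ * x ^ β) - η * (A₁ * x ^ β)
        = (A₁ * G₁ β + l₁ * A₀) * x ^ β := by
      rw [hG₁]
      linear_combination (μ₁ * A₁ * β) * hx1 + (1/2 * σ₁^2 * A₁ * β * (β-1)) * hx2
    rw [e, key1, zero_mul]
end

section
/- The eight constants satisfy the sign conditions P^L_A < 0, P^L_B > 0, P^U_A > 0, P^U_B < 0, Q^L_A > 0, Q^L_B < 0, Q^U_A < 0, and Q^U_B > 0. -/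
set_option maxHeartbeats 1000000


/-- The eight constants satisfy `P^L_A < 0`, `P^L_B > 0`, `P^U_A > 0`,
`P^U_B < 0`, `Q^L_A > 0`, `Q^L_B < 0`, `Q^U_A < 0`, `Q^U_B > 0`. -/
theorem PQ_signs
    (r μ₀ μ₁ σ₀ σ₁ l₀ l₁ η : ℝ)
    (hσ₀ : 0 < σ₀) (hσ₁ : 0 < σ₁) (hl₀ : 0 < l₀) (hl₁ : 0 < l₁)
    (hη : 0 < η) (hr : 0 < r) (hrμ : max μ₀ μ₁ < r)
    (G₀ G₁L G₁U : ℝ → ℝ)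
    (hG₀ : ∀ β, G₀ β = (1/2) * σ₀^2 * β * (β - 1) + μ₀ * β - (l₀ + r))
    (hG₁L : ∀ β, G₁L β = (1/2) * σ₁^2 * β * (β - 1) + μ₁ * β - (l₁ + r))
    (hG₁U : ∀ β, G₁U β = (1/2) * σ₁^2 * β * (β - 1) + μ₁ * β - (l₁ + r + η))
    (FL FU : ℝ → ℝ)
    (hFL : ∀ β, FL β = G₀ β * G₁L β - l₀ * l₁)
    (hFU : ∀ β, FU β = G₀ β * G₁U β - l₀ * l₁)
    (βLA βLB βUA βUB : ℝ)
    (hβLA : FL βLA = 0) (hβLB : FL βLB = 0)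
    (hβLord : 1 < βLB ∧ βLB < βLA)
    (hβLroots : ∀ β, 0 < β → FL β = 0 → β = βLA ∨ β = βLB)
    (hβUA : FU βUA = 0) (hβUB : FU βUB = 0)
    (hβUord : βUB < βUA ∧ βUA < 0)
    (hβUroots : ∀ β, β < 0 → FU β = 0 → β = βUA ∨ β = βUB)
    (α K I : ℝ) (hα : 0 < α) (hK : 0 ≤ K) (hI : 0 ≤ I) (hKI : 0 < K + I)
    (Kt : ℝ) (hKt : Kt = K + I / α)
    (a₁ b₁ : ℝ)
    (ha₁ : a₁ = α * η * (r - μ₀ + l₀) / ((r - μ₀ + l₀) * (r - μ₁ + l₁ + η) - l₀ * l₁))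
    (hb₁ : b₁ = α * Kt * η * (r + l₀) / (l₀ * l₁ - (r + l₀) * (r + l₁ + η)))
    (D₁ D₂ D₃ : ℝ)
    (hD₁ : D₁ = βLA - βLB) (hD₂ : D₂ = βLA + βLB - βUA - βUB) (hD₃ : D₃ = βUA - βUB)
    (PLA QLA PLB QLB PUA QUA PUB QUB : ℝ)
    (hPLA : PLA = (α * (βLB - βUA) * (-βLB + βUB) + a₁ * (βUA - 1) * (βUB - 1)) / (D₁ * D₂))
    (hQLA : QLA = (-(α * Kt) * (βLB - βUA) * (-βLB + βUB) + b₁ * βUA * βUB) / (D₁ * D₂))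
    (hPLB : PLB = (α * (βLA - βUA) * (βLA - βUB) - a₁ * (βUA - 1) * (βUB - 1)) / (D₁ * D₂))
    (hQLB : QLB = (-(α * Kt) * (βLA - βUA) * (βLA - βUB) - b₁ * βUA * βUB) / (D₁ * D₂))
    (hPUA : PUA = (α * (βLA - βUB) * (βLB - βUB) + a₁ * (βUB - 1) * (βLA + βLB - βUB - 1)) / (D₃ * D₂))
    (hQUA : QUA = (-(α * Kt) * (βLA - βUB) * (βLB - βUB) + b₁ * βUB * (βLA + βLB - βUB)) / (D₃ * D₂))
    (hPUB : PUB = (α * (βLA - βUA) * (-βLB + βUA) - a₁ * (βUA - 1) * (βLA + βLB - βUA - 1)) / (D₃ * D₂))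
    (hQUB : QUB = (-(α * Kt) * (βLA - βUA) * (-βLB + βUA) - b₁ * βUA * (βLA + βLB - βUA)) / (D₃ * D₂)) :
    PLA < 0 ∧ PLB > 0 ∧ PUA > 0 ∧ PUB < 0 ∧
    QLA > 0 ∧ QLB < 0 ∧ QUA < 0 ∧ QUB > 0 := by

  clear hG₀ hG₁L hG₁U hFL hFU hβLroots hβUroots hβLA hβLB hβUA hβUB
  clear G₀ G₁L G₁U FL FU hσ₀ hσ₁ σ₀ σ₁
  obtain ⟨hB1, hAB⟩ := hβLord
  obtain ⟨hUBA, hUA0⟩ := hβUord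
  have hμ₀ : μ₀ < r := lt_of_le_of_lt (le_max_left _ _) hrμ
  have hμ₁ : μ₁ < r := lt_of_le_of_lt (le_max_right _ _) hrμ
  have hKt0 : 0 < Kt := by
    rw [hKt]
    rcases lt_or_ge 0 K with h | h
    · positivity
    · have hK0 : K = 0 := le_antisymm h hK
      have hI0 : 0 < I := by nlinarith
      rw [hK0]; positivity
  have hdena : 0 < (r - μ₀ + l₀) * (r - μ₁ + l₁ + η) - l₀ * l₁ := by nlinarith
  have ha₁0 : 0 < a₁ := by
    rw [ha₁]
    apply div_pos _ hdena
    have : 0 < r - μ₀ + l₀ := by linarith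
    positivity
  have ha₁α : a₁ < α := by
    rw [ha₁, div_lt_iff₀ hdena]
    have hAC : l₀ * l₁ < (r - μ₀ + l₀) * (r - μ₁ + l₁) :=
      mul_lt_mul'' (by linarith) (by linarith) (le_of_lt hl₀) (le_of_lt hl₁)
    nlinarith [mul_pos hα (sub_pos.2 hAC)]
  have hdenb : l₀ * l₁ - (r + l₀) * (r + l₁ + η) < 0 := by nlinarith
  have hb₁0 : b₁ < 0 := by
    rw [hb₁]
    apply div_neg_of_pos_of_neg _ hdenb
    positivity
  have hb₁K : -(α * Kt) < b₁ := by
    rw [hb₁, lt_div_iff_of_neg hdenb]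
    have hAC : l₀ * l₁ < (r + l₀) * (r + l₁) :=
      mul_lt_mul'' (by linarith) (by linarith) (le_of_lt hl₀) (le_of_lt hl₁)
    nlinarith [mul_pos (mul_pos hα hKt0) (sub_pos.2 hAC)]
  have hD₁' : 0 < D₁ := by rw [hD₁]; linarith
  have hD₂' : 0 < D₂ := by rw [hD₂]; linarith
  have hD₃' : 0 < D₃ := by rw [hD₃]; linarith
  have hD12 : 0 < D₁ * D₂ := mul_pos hD₁' hD₂'
  have hD32 : 0 < D₃ * D₂ := mul_pos hD₃' hD₂'
  clear ha₁ hb₁ hKt hdena hdenb hKI hK hI hrμ hμ₀ hμ₁ hr hη hl₀ hl₁ hα hKt0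
  clear hD₁ hD₂ hD₃
  revert hPLA hQLA hPLB hQLB hPUA hQUA hPUB hQUB
  have hαKb : 0 < α * Kt + b₁ := by linarith
  have hαa : 0 < α - a₁ := by linarith
  have e1 : 0 < βLB - 1 := by linarith
  have e2 : 0 < βLA - 1 := by linarith
  have e3 : 0 < 1 - βUA := by linarith
  have e4 : 0 < 1 - βUB := by linarith
  have e5 : 0 < -βUA := by linarith
  have e6 : 0 < -βUB := by linarith
  have hα' : 0 < α := by nlinarith
  have hKt' : 0 < α * Kt := by nlinarith
  have nPLA : α * (βLB - βUA) * (-βLB + βUB) + a₁ * (βUA - 1) * (βUB - 1) < 0 := by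
    nlinarith [mul_pos hα' (mul_pos e1 (show (0:ℝ) < βLB + 1 - βUA - βUB by linarith)),
      mul_pos hαa (mul_pos e3 e4)]
  have nPLB : 0 < α * (βLA - βUA) * (βLA - βUB) - a₁ * (βUA - 1) * (βUB - 1) := by
    nlinarith [mul_pos hα' (mul_pos e2 (show (0:ℝ) < βLA + 1 - βUA - βUB by linarith)),
      mul_pos hαa (mul_pos e3 e4)]
  have nPUA : 0 < α * (βLA - βUB) * (βLB - βUB) + a₁ * (βUB - 1) * (βLA + βLB - βUB - 1) := by
    nlinarith [mul_pos hα' (mul_pos e2 e1),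
      mul_pos hαa (mul_pos e4 (show (0:ℝ) < βLA + βLB - βUB - 1 by linarith))]
  have nPUB : α * (βLA - βUA) * (-βLB + βUA) - a₁ * (βUA - 1) * (βLA + βLB - βUA - 1) < 0 := by
    nlinarith [mul_pos hα' (mul_pos e2 e1),
      mul_pos hαa (mul_pos e3 (show (0:ℝ) < βLA + βLB - βUA - 1 by linarith))]
  have nQLA : 0 < -(α * Kt) * (βLB - βUA) * (-βLB + βUB) + b₁ * βUA * βUB := by
    nlinarith [mul_pos hKt' (mul_pos e1 (show (0:ℝ) < βLB - βUA - βUB by linarith)),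
      mul_pos hKt' (mul_pos e1 (show (0:ℝ) < βLB by linarith)),
      mul_pos hαKb (mul_pos e5 e6)]
  have nQLB : -(α * Kt) * (βLA - βUA) * (βLA - βUB) - b₁ * βUA * βUB < 0 := by
    nlinarith [mul_pos hKt' (mul_pos e2 (show (0:ℝ) < βLA - βUA - βUB by linarith)),
      mul_pos hKt' (mul_pos e2 (show (0:ℝ) < βLA by linarith)),
      mul_pos hαKb (mul_pos e5 e6)]
  have nQUA : -(α * Kt) * (βLA - βUB) * (βLB - βUB) + b₁ * βUB * (βLA + βLB - βUB) < 0 := by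
    nlinarith [mul_pos hKt' (mul_pos (show (0:ℝ) < βLA by linarith) (show (0:ℝ) < βLB by linarith)),
      mul_pos hαKb (mul_pos e6 (show (0:ℝ) < βLA + βLB - βUB by linarith))]
  have nQUB : 0 < -(α * Kt) * (βLA - βUA) * (-βLB + βUA) - b₁ * βUA * (βLA + βLB - βUA) := by
    nlinarith [mul_pos hKt' (mul_pos (show (0:ℝ) < βLA by linarith) (show (0:ℝ) < βLB by linarith)),
      mul_pos hαKb (mul_pos e5 (show (0:ℝ) < βLA + βLB - βUA by linarith))]
  intro hPLA hQLA hPLB hQLB hPUA hQUA hPUB hQUB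
  refine ⟨?_, ?_, ?_, ?_, ?_, ?_, ?_, ?_⟩
  · rw [hPLA]; exact div_neg_of_neg_of_pos nPLA hD12
  · rw [hPLB]; exact div_pos nPLB hD12
  · rw [hPUA]; exact div_pos nPUA hD32
  · rw [hPUB]; exact div_neg_of_neg_of_pos nPUB hD32
  · rw [hQLA]; exact div_pos nQLA hD12
  · rw [hQLB]; exact div_neg_of_neg_of_pos nQLB hD12
  · rw [hQUA]; exact div_neg_of_neg_of_pos nQUA hD32
  · rw [hQUB]; exact div_pos nQUB hD32
end

section
/- The quantity 𝒫 is strictly positive (indeed each of its four summands is positive), the quantity 𝒬 is strictly negative (each of its five summands is negative), and consequently the threshold x* = −𝒬/𝒫 is strictly positive. -/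
lemma thp_quad_large (A B C y : ℝ) (hA : 0 < A) :
    ∃ M : ℝ, ∀ β ≥ M, y ≤ A * β ^ 2 + B * β + C := by
  refine ⟨max 1 ((max y 0 + |C| + |B| + 1) / A), fun β hβ => ?_⟩
  have h1 : (1:ℝ) ≤ β := le_trans (le_max_left _ _) hβ
  have h2 : (max y 0 + |C| + |B| + 1) ≤ A * β := by
    rw [← div_le_iff₀' hA] ; exact le_trans (le_max_right _ _) hβ
  have h3 : (max y 0 + |C| + |B| + 1) * β ≤ (A * β) * β :=
    mul_le_mul_of_nonneg_right h2 (by linarith)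
  have h4 := le_max_left y (0:ℝ)
  have h5 := le_max_right y (0:ℝ)
  have h6 := neg_abs_le C
  have h7 := neg_abs_le B
  have h8 := abs_nonneg B
  have h9 : (0:ℝ) ≤ (|B| + B) * β := mul_nonneg (by linarith) (by linarith)
  have h10 : max y 0 * 1 ≤ max y 0 * β := mul_le_mul_of_nonneg_left h1 h5
  have h11 : |C| * 1 ≤ |C| * β := mul_le_mul_of_nonneg_left h1 (abs_nonneg C)
  nlinarith [h3, h9, h10, h11]

lemma thp_quad_large_bot (A B C y : ℝ) (hA : 0 < A) :
    ∃ M : ℝ, ∀ β ≤ M, y ≤ A * β ^ 2 + B * β + C := by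
  obtain ⟨M, hM⟩ := thp_quad_large A (-B) C y hA
  refine ⟨-M, fun β hβ => ?_⟩
  have h := hM (-β) (by linarith)
  nlinarith [h]

lemma thp_sandwich (c C X Y : ℝ) (h1 : 0 < c) (h2 : c < C) (h3 : 0 < Y) (h4 : Y < X) :
    c * Y < C * X := by nlinarith

lemma thp_fact1 (r μ₀ μ₁ l₀ l₁ : ℝ) (hl₀ : 0 < l₀) (hl₁ : 0 < l₁)
    (hμ₀ : μ₀ < r) (hμ₁ : μ₁ < r) :
    0 < (r - μ₀ + l₀) * (r - μ₁ + l₁) - l₀ * l₁ := by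
  nlinarith [mul_pos (sub_pos.mpr hμ₀) (sub_pos.mpr hμ₁), mul_pos (sub_pos.mpr hμ₀) hl₁,
    mul_pos hl₀ (sub_pos.mpr hμ₁)]

lemma thp_fact2 (r l₀ l₁ η : ℝ) (hr : 0 < r) (hl₀ : 0 < l₀) (hl₁ : 0 < l₁) (hη : 0 < η) :
    0 < (l₀ + r) * (l₁ + r + η) - l₀ * l₁ := by
  nlinarith [mul_pos hl₀ hr, mul_pos hr hl₁, mul_pos hr hr, mul_pos (add_pos hl₀ hr) hη]

lemma thp_fact3 (l₀ l₁ y : ℝ) (hl₀ : 0 < l₀) (hl₁ : 0 < l₁) (h1 : l₀ < y) (h2 : l₁ < y) :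
    l₀ * l₁ < y * y := by nlinarith

lemma thp_fact4a (r μ₀ μ₁ l₀ l₁ η : ℝ) (hl₀ : 0 < l₀) (hl₁ : 0 < l₁)
    (hμ₀ : μ₀ < r) (hμ₁ : μ₁ < r) (hη : 0 < η) :
    0 < (r - μ₀ + l₀) * (r - μ₁ + l₁ + η) - l₀ * l₁ := by
  have h := thp_fact1 r μ₀ μ₁ l₀ l₁ hl₀ hl₁ hμ₀ hμ₁
  nlinarith [mul_pos (show (0:ℝ) < r - μ₀ + l₀ by linarith) hη]

lemma thp_fact4b (r μ₀ μ₁ l₀ l₁ η α : ℝ) (hl₀ : 0 < l₀) (hl₁ : 0 < l₁)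
    (hμ₀ : μ₀ < r) (hμ₁ : μ₁ < r) (hη : 0 < η) (hα : 0 < α) :
    α * η * (r - μ₀ + l₀) < α * ((r - μ₀ + l₀) * (r - μ₁ + l₁ + η) - l₀ * l₁) := by
  have h := thp_fact1 r μ₀ μ₁ l₀ l₁ hl₀ hl₁ hμ₀ hμ₁
  nlinarith [mul_pos hα h]

lemma thp_fact5 (r l₀ l₁ η : ℝ) (hr : 0 < r) (hl₀ : 0 < l₀) (hl₁ : 0 < l₁) (hη : 0 < η) :
    l₀ * l₁ - (r + l₀) * (r + l₁ + η) < 0 := by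
  nlinarith [mul_pos hl₀ hr, mul_pos hr hl₁, mul_pos hr hr, mul_pos (add_pos hr hl₀) hη]

lemma thp_fact6 (r l₀ l₁ η c : ℝ) (hr : 0 < r) (hl₀ : 0 < l₀) (hl₁ : 0 < l₁)
    (hη : 0 < η) (hc : 0 < c) :
    c * η * (r + l₀) < -c * (l₀ * l₁ - (r + l₀) * (r + l₁ + η)) := by
  have h : 0 < (r + l₀) * (r + l₁) - l₀ * l₁ := by
    nlinarith [mul_pos hr hl₁, mul_pos hr hr, mul_pos hl₀ hr]
  nlinarith [mul_pos hc h]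

lemma thp_Pnums (α a₁ bLA bLB bUA bUB : ℝ) (hα : 0 < α) (ha₁ : 0 < a₁) (halt : a₁ < α)
    (h1 : 1 < bLB) (h2 : bLB < bLA) (h3 : bUB < bUA) (h4 : bUA < 0) :
    α * (bLB - bUA) * (-bLB + bUB) + a₁ * (bUA - 1) * (bUB - 1) < 0 ∧
    0 < α * (bLA - bUA) * (bLA - bUB) - a₁ * (bUA - 1) * (bUB - 1) ∧
    0 < α * (bLA - bUB) * (bLB - bUB) + a₁ * (bUB - 1) * (bLA + bLB - bUB - 1) ∧
    α * (bLA - bUA) * (-bLB + bUA) - a₁ * (bUA - 1) * (bLA + bLB - bUA - 1) < 0 := by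
  have hY : 0 < (1 - bUA) * (1 - bUB) := mul_pos (by linarith) (by linarith)
  have e1 : (bLB - bUA) * (bLB - bUB) - (1 - bUA) * (1 - bUB)
      = (bLB - 1) * (bLB + 1 - bUA - bUB) := by ring
  have e2 : (bLA - bUA) * (bLA - bUB) - (1 - bUA) * (1 - bUB)
      = (bLA - 1) * (bLA + 1 - bUA - bUB) := by ring
  have m1 : 0 < (bLB - 1) * (bLB + 1 - bUA - bUB) := mul_pos (by linarith) (by linarith)
  have m2 : 0 < (bLA - 1) * (bLA + 1 - bUA - bUB) := mul_pos (by linarith) (by linarith)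
  have X1 : (1 - bUA) * (1 - bUB) < (bLB - bUA) * (bLB - bUB) := by linarith
  have X2 : (1 - bUA) * (1 - bUB) < (bLA - bUA) * (bLA - bUB) := by linarith
  have S1 := thp_sandwich a₁ α _ _ ha₁ halt hY X1
  have S2 := thp_sandwich a₁ α _ _ ha₁ halt hY X2
  have hY3 : 0 < (1 - bUB) * (bLA + bLB - bUB - 1) := mul_pos (by linarith) (by linarith)
  have hY4 : 0 < (1 - bUA) * (bLA + bLB - bUA - 1) := mul_pos (by linarith) (by linarith)
  have e3 : (bLA - bUB) * (bLB - bUB) - (1 - bUB) * (bLA + bLB - bUB - 1)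
      = (bLA - 1) * (bLB - 1) := by ring
  have e4 : (bLA - bUA) * (bLB - bUA) - (1 - bUA) * (bLA + bLB - bUA - 1)
      = (bLA - 1) * (bLB - 1) := by ring
  have m3 : 0 < (bLA - 1) * (bLB - 1) := mul_pos (by linarith) (by linarith)
  have X3 : (1 - bUB) * (bLA + bLB - bUB - 1) < (bLA - bUB) * (bLB - bUB) := by linarith
  have X4 : (1 - bUA) * (bLA + bLB - bUA - 1) < (bLA - bUA) * (bLB - bUA) := by linarith
  have S3 := thp_sandwich a₁ α _ _ ha₁ halt hY3 X3
  have S4 := thp_sandwich a₁ α _ _ ha₁ halt hY4 X4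
  refine ⟨by nlinarith [S1], by nlinarith [S2], by nlinarith [S3], by nlinarith [S4]⟩

lemma thp_Qnums (c b₁ bLA bLB bUA bUB : ℝ) (hc : 0 < c) (hb1 : -c < b₁) (hb2 : b₁ < 0)
    (h1 : 1 < bLB) (h2 : bLB < bLA) (h3 : bUB < bUA) (h4 : bUA < 0) :
    0 < -c * (bLB - bUA) * (-bLB + bUB) + b₁ * bUA * bUB ∧
    -c * (bLA - bUA) * (bLA - bUB) - b₁ * bUA * bUB < 0 ∧
    -c * (bLA - bUB) * (bLB - bUB) + b₁ * bUB * (bLA + bLB - bUB) < 0 ∧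
    0 < -c * (bLA - bUA) * (-bLB + bUA) - b₁ * bUA * (bLA + bLB - bUA) := by
  have hb1' : 0 < -b₁ := by linarith
  have hb1'' : -b₁ < c := by linarith
  have hY : 0 < bUA * bUB := mul_pos_of_neg_of_neg h4 (by linarith)
  have e1 : (bLB - bUA) * (bLB - bUB) - bUA * bUB = bLB * (bLB - bUA - bUB) := by ring
  have e2 : (bLA - bUA) * (bLA - bUB) - bUA * bUB = bLA * (bLA - bUA - bUB) := by ring
  have m1 : 0 < bLB * (bLB - bUA - bUB) := mul_pos (by linarith) (by linarith)
  have m2 : 0 < bLA * (bLA - bUA - bUB) := mul_pos (by linarith) (by linarith)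
  have X1 : bUA * bUB < (bLB - bUA) * (bLB - bUB) := by linarith
  have X2 : bUA * bUB < (bLA - bUA) * (bLA - bUB) := by linarith
  have S1 := thp_sandwich (-b₁) c _ _ hb1' hb1'' hY X1
  have S2 := thp_sandwich (-b₁) c _ _ hb1' hb1'' hY X2
  have hY3 : 0 < (-bUB) * (bLA + bLB - bUB) := mul_pos (by linarith) (by linarith)
  have hY4 : 0 < (-bUA) * (bLA + bLB - bUA) := mul_pos (by linarith) (by linarith)
  have e3 : (bLA - bUB) * (bLB - bUB) - (-bUB) * (bLA + bLB - bUB) = bLA * bLB := by ring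
  have e4 : (bLA - bUA) * (bLB - bUA) - (-bUA) * (bLA + bLB - bUA) = bLA * bLB := by ring
  have m3 : 0 < bLA * bLB := mul_pos (by linarith) (by linarith)
  have X3 : (-bUB) * (bLA + bLB - bUB) < (bLA - bUB) * (bLB - bUB) := by linarith
  have X4 : (-bUA) * (bLA + bLB - bUA) < (bLA - bUA) * (bLB - bUA) := by linarith
  have S3 := thp_sandwich (-b₁) c _ _ hb1' hb1'' hY3 X3
  have S4 := thp_sandwich (-b₁) c _ _ hb1' hb1'' hY4 X4
  refine ⟨by nlinarith [S1], by nlinarith [S2], by nlinarith [S3], by nlinarith [S4]⟩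


set_option maxHeartbeats 1000000 in
/-- The quantity `𝒫` is strictly positive (each of its four summands is
positive), the quantity `𝒬` is strictly negative (each of its five summands is
negative), hence the threshold `x* = -𝒬/𝒫` is strictly positive. -/
theorem threshold_positive
    (r μ₀ μ₁ σ₀ σ₁ l₀ l₁ η : ℝ)
    (hσ₀ : 0 < σ₀) (hσ₁ : 0 < σ₁) (hl₀ : 0 < l₀) (hl₁ : 0 < l₁)
    (hη : 0 < η) (hr : 0 < r) (hrμ : max μ₀ μ₁ < r)
    (G₀ G₁L G₁U : ℝ → ℝ)
    (hG₀ : ∀ β, G₀ β = (1/2) * σ₀^2 * β * (β - 1) + μ₀ * β - (l₀ + r))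
    (hG₁L : ∀ β, G₁L β = (1/2) * σ₁^2 * β * (β - 1) + μ₁ * β - (l₁ + r))
    (hG₁U : ∀ β, G₁U β = (1/2) * σ₁^2 * β * (β - 1) + μ₁ * β - (l₁ + r + η))
    (FL FU : ℝ → ℝ)
    (hFL : ∀ β, FL β = G₀ β * G₁L β - l₀ * l₁)
    (hFU : ∀ β, FU β = G₀ β * G₁U β - l₀ * l₁)
    (βLA βLB βUA βUB : ℝ)
    (hβLA : FL βLA = 0) (hβLB : FL βLB = 0)
    (hβLord : 1 < βLB ∧ βLB < βLA)
    (hβLroots : ∀ β, 0 < β → FL β = 0 → β = βLA ∨ β = βLB)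
    (hβUA : FU βUA = 0) (hβUB : FU βUB = 0)
    (hβUord : βUB < βUA ∧ βUA < 0)
    (hβUroots : ∀ β, β < 0 → FU β = 0 → β = βUA ∨ β = βUB)
    (α K I : ℝ) (hα : 0 < α) (hK : 0 ≤ K) (hI : 0 ≤ I) (hKI : 0 < K + I)
    (Kt : ℝ) (hKt : Kt = K + I / α)
    (a₁ b₁ : ℝ)
    (ha₁ : a₁ = α * η * (r - μ₀ + l₀) / ((r - μ₀ + l₀) * (r - μ₁ + l₁ + η) - l₀ * l₁))
    (hb₁ : b₁ = α * Kt * η * (r + l₀) / (l₀ * l₁ - (r + l₀) * (r + l₁ + η)))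
    (D₁ D₂ D₃ : ℝ)
    (hD₁ : D₁ = βLA - βLB) (hD₂ : D₂ = βLA + βLB - βUA - βUB) (hD₃ : D₃ = βUA - βUB)
    (PLA QLA PLB QLB PUA QUA PUB QUB : ℝ)
    (hPLA : PLA = (α * (βLB - βUA) * (-βLB + βUB) + a₁ * (βUA - 1) * (βUB - 1)) / (D₁ * D₂))
    (hQLA : QLA = (-(α * Kt) * (βLB - βUA) * (-βLB + βUB) + b₁ * βUA * βUB) / (D₁ * D₂))
    (hPLB : PLB = (α * (βLA - βUA) * (βLA - βUB) - a₁ * (βUA - 1) * (βUB - 1)) / (D₁ * D₂))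
    (hQLB : QLB = (-(α * Kt) * (βLA - βUA) * (βLA - βUB) - b₁ * βUA * βUB) / (D₁ * D₂))
    (hPUA : PUA = (α * (βLA - βUB) * (βLB - βUB) + a₁ * (βUB - 1) * (βLA + βLB - βUB - 1)) / (D₃ * D₂))
    (hQUA : QUA = (-(α * Kt) * (βLA - βUB) * (βLB - βUB) + b₁ * βUB * (βLA + βLB - βUB)) / (D₃ * D₂))
    (hPUB : PUB = (α * (βLA - βUA) * (-βLB + βUA) - a₁ * (βUA - 1) * (βLA + βLB - βUA - 1)) / (D₃ * D₂))
    (hQUB : QUB = (-(α * Kt) * (βLA - βUA) * (-βLB + βUA) - b₁ * βUA * (βLA + βLB - βUA)) / (D₃ * D₂))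
    (b₀ : ℝ)
    (hb₀ : b₀ = α * Kt * η * l₀ / (l₀ * l₁ - (r + l₀) * (r + l₁ + η)))
    (P Q : ℝ)
    (hP : P = (1 - βLA) * PLA / G₀ βLA + (1 - βLB) * PLB / G₀ βLB
        + (βUA - 1) * PUA / G₀ βUA + (βUB - 1) * PUB / G₀ βUB)
    (hQ : Q = (1 - βLA) * QLA / G₀ βLA + (1 - βLB) * QLB / G₀ βLB
        + (βUA - 1) * QUA / G₀ βUA + (βUB - 1) * QUB / G₀ βUB + b₀ / l₀) :
    0 < (1 - βLA) * PLA / G₀ βLA ∧ 0 < (1 - βLB) * PLB / G₀ βLB ∧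
    0 < (βUA - 1) * PUA / G₀ βUA ∧ 0 < (βUB - 1) * PUB / G₀ βUB ∧
    0 < P ∧
    (1 - βLA) * QLA / G₀ βLA < 0 ∧ (1 - βLB) * QLB / G₀ βLB < 0 ∧
    (βUA - 1) * QUA / G₀ βUA < 0 ∧ (βUB - 1) * QUB / G₀ βUB < 0 ∧
    b₀ / l₀ < 0 ∧
    Q < 0 ∧
    0 < -Q / P := by
  obtain ⟨hB1, hBord⟩ := hβLord
  obtain ⟨hUord, hUA0⟩ := hβUord
  have hμ₀ : μ₀ < r := lt_of_le_of_lt (le_max_left _ _) hrμ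
  have hμ₁ : μ₁ < r := lt_of_le_of_lt (le_max_right _ _) hrμ
  -- continuity
  have hG₀c : Continuous G₀ := by
    rw [show G₀ = fun β => (1/2) * σ₀^2 * β * (β - 1) + μ₀ * β - (l₀ + r) from funext hG₀]
    fun_prop
  have hG₁Lc : Continuous G₁L := by
    rw [show G₁L = fun β => (1/2) * σ₁^2 * β * (β - 1) + μ₁ * β - (l₁ + r) from funext hG₁L]
    fun_prop
  have hG₁Uc : Continuous G₁U := by
    rw [show G₁U = fun β => (1/2) * σ₁^2 * β * (β - 1) + μ₁ * β - (l₁ + r + η) from funext hG₁U]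
    fun_prop
  have hFLc : Continuous FL := by
    rw [show FL = fun β => G₀ β * G₁L β - l₀ * l₁ from funext hFL]
    exact (hG₀c.mul hG₁Lc).sub continuous_const
  have hFUc : Continuous FU := by
    rw [show FU = fun β => G₀ β * G₁U β - l₀ * l₁ from funext hFU]
    exact (hG₀c.mul hG₁Uc).sub continuous_const
  -- values at 1 and 0
  have hG01 : G₀ 1 < 0 := by rw [hG₀]; linarith only [hμ₀, hl₀]
  have hG00 : G₀ 0 < 0 := by rw [hG₀]; linarith only [hl₀, hr]
  have hFL1 : 0 < FL 1 := by
    rw [hFL, hG₀, hG₁L]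
    linarith only [thp_fact1 r μ₀ μ₁ l₀ l₁ hl₀ hl₁ hμ₀ hμ₁]
  have hFU0 : 0 < FU 0 := by
    rw [hFU, hG₀, hG₁U]
    linarith only [thp_fact2 r l₀ l₁ η hr hl₀ hl₁ hη]
  -- product identities at roots
  have pLA : G₀ βLA * G₁L βLA = l₀ * l₁ := by linarith only [hFL βLA, hβLA]
  have pLB : G₀ βLB * G₁L βLB = l₀ * l₁ := by linarith only [hFL βLB, hβLB]
  have pUA : G₀ βUA * G₁U βUA = l₀ * l₁ := by linarith only [hFU βUA, hβUA]
  have pUB : G₀ βUB * G₁U βUB = l₀ * l₁ := by linarith only [hFU βUB, hβUB]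
  have hll : 0 < l₀ * l₁ := mul_pos hl₀ hl₁
  -- growth bounds
  set y : ℝ := max l₀ l₁ + 1 with hy
  have hyl₀ : l₀ < y := by have := le_max_left l₀ l₁; simp only [hy]; linarith
  have hyl₁ : l₁ < y := by have := le_max_right l₀ l₁; simp only [hy]; linarith
  have hy0 : 0 < y := by linarith
  have hyy : l₀ * l₁ < y * y := thp_fact3 l₀ l₁ y hl₀ hl₁ hyl₀ hyl₁
  obtain ⟨M₀, hM₀⟩ := thp_quad_large (σ₀^2/2) (μ₀ - σ₀^2/2) (-(l₀+r)) y (by positivity)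
  obtain ⟨M₁, hM₁⟩ := thp_quad_large (σ₁^2/2) (μ₁ - σ₁^2/2) (-(l₁+r)) y (by positivity)
  obtain ⟨M₂, hM₂⟩ := thp_quad_large_bot (σ₀^2/2) (μ₀ - σ₀^2/2) (-(l₀+r)) y (by positivity)
  obtain ⟨M₃, hM₃⟩ := thp_quad_large_bot (σ₁^2/2) (μ₁ - σ₁^2/2) (-(l₁+r+η)) y (by positivity)
  have hG₀big : ∀ β ≥ M₀, y ≤ G₀ β := fun β hb => by
    have h := hM₀ β hb
    have e : G₀ β = σ₀^2/2 * β^2 + (μ₀ - σ₀^2/2) * β + (-(l₀+r)) := by rw [hG₀]; ring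
    rw [e]; exact h
  have hG₁Lbig : ∀ β ≥ M₁, y ≤ G₁L β := fun β hb => by
    have h := hM₁ β hb
    have e : G₁L β = σ₁^2/2 * β^2 + (μ₁ - σ₁^2/2) * β + (-(l₁+r)) := by rw [hG₁L]; ring
    rw [e]; exact h
  have hG₀big' : ∀ β ≤ M₂, y ≤ G₀ β := fun β hb => by
    have h := hM₂ β hb
    have e : G₀ β = σ₀^2/2 * β^2 + (μ₀ - σ₀^2/2) * β + (-(l₀+r)) := by rw [hG₀]; ring
    rw [e]; exact h
  have hG₁Ubig : ∀ β ≤ M₃, y ≤ G₁U β := fun β hb => by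
    have h := hM₃ β hb
    have e : G₁U β = σ₁^2/2 * β^2 + (μ₁ - σ₁^2/2) * β + (-(l₁+r+η)) := by rw [hG₁U]; ring
    rw [e]; exact h
  -- sign of G₀ at βLB
  have hGLB : G₀ βLB < 0 := by
    by_contra h
    push_neg at h
    have hne : G₀ βLB ≠ 0 := fun h0 => by rw [h0, zero_mul] at pLB; linarith
    have hpos : 0 < G₀ βLB := lt_of_le_of_ne h (Ne.symm hne)
    obtain ⟨x, hx, hx0⟩ := intermediate_value_Ioo (le_of_lt hB1) hG₀c.continuousOn
      (Set.mem_Ioo.mpr ⟨hG01, hpos⟩)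
    have hFLx : FL x < 0 := by rw [hFL, hx0, zero_mul]; linarith
    obtain ⟨ρ, hρ, hρ0⟩ := intermediate_value_Ioo' (le_of_lt hx.1) hFLc.continuousOn
      (Set.mem_Ioo.mpr ⟨hFLx, hFL1⟩)
    rcases hβLroots ρ (by linarith [hρ.1]) hρ0 with h'|h' <;>
      · rw [h'] at hρ; linarith [hρ.2, hx.2]
  -- sign of G₀ at βLA
  have hGLA : 0 < G₀ βLA := by
    by_contra h
    push_neg at h
    have hne : G₀ βLA ≠ 0 := fun h0 => by rw [h0, zero_mul] at pLA; linarith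
    have hneg : G₀ βLA < 0 := lt_of_le_of_ne h hne
    set M : ℝ := max (max M₀ M₁) (βLA + 1) with hM
    have hMA : βLA < M := lt_of_lt_of_le (by linarith) (le_max_right _ _)
    have hGM : y ≤ G₀ M := hG₀big M (le_trans (le_max_left _ _) (le_max_left _ _))
    have hG1M : y ≤ G₁L M := hG₁Lbig M (le_trans (le_max_right _ _) (le_max_left _ _))
    obtain ⟨x, hx, hx0⟩ := intermediate_value_Ioo (le_of_lt hMA) hG₀c.continuousOn
      (Set.mem_Ioo.mpr ⟨hneg, by linarith⟩)
    have hFLx : FL x < 0 := by rw [hFL, hx0, zero_mul]; linarith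
    have hFLM : 0 < FL M := by
      rw [hFL]
      linarith only [mul_le_mul hGM hG1M (by linarith) (by linarith : (0:ℝ) ≤ G₀ M), hyy]
    obtain ⟨ρ, hρ, hρ0⟩ := intermediate_value_Ioo (le_of_lt hx.2) hFLc.continuousOn
      (Set.mem_Ioo.mpr ⟨hFLx, hFLM⟩)
    rcases hβLroots ρ (by linarith [hρ.1, hx.1]) hρ0 with h'|h' <;>
      · rw [h'] at hρ; linarith [hρ.1, hx.1]
  -- sign of G₀ at βUA
  have hGUA : G₀ βUA < 0 := by
    by_contra h
    push_neg at h
    have hne : G₀ βUA ≠ 0 := fun h0 => by rw [h0, zero_mul] at pUA; linarith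
    have hpos : 0 < G₀ βUA := lt_of_le_of_ne h (Ne.symm hne)
    obtain ⟨x, hx, hx0⟩ := intermediate_value_Ioo' (le_of_lt hUA0) hG₀c.continuousOn
      (Set.mem_Ioo.mpr ⟨hG00, hpos⟩)
    have hFUx : FU x < 0 := by rw [hFU, hx0, zero_mul]; linarith
    obtain ⟨ρ, hρ, hρ0⟩ := intermediate_value_Ioo (le_of_lt hx.2) hFUc.continuousOn
      (Set.mem_Ioo.mpr ⟨hFUx, hFU0⟩)
    rcases hβUroots ρ (by linarith [hρ.2]) hρ0 with h'|h' <;>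
      · rw [h'] at hρ; linarith [hρ.1, hx.1]
  -- sign of G₀ at βUB
  have hGUB : 0 < G₀ βUB := by
    by_contra h
    push_neg at h
    have hne : G₀ βUB ≠ 0 := fun h0 => by rw [h0, zero_mul] at pUB; linarith
    have hneg : G₀ βUB < 0 := lt_of_le_of_ne h hne
    set M : ℝ := min (min M₂ M₃) (βUB - 1) with hM
    have hMB : M < βUB := lt_of_le_of_lt (min_le_right _ _) (by linarith)
    have hGM : y ≤ G₀ M := hG₀big' M (le_trans (min_le_left _ _) (min_le_left _ _))
    have hG1M : y ≤ G₁U M := hG₁Ubig M (le_trans (min_le_left _ _) (min_le_right _ _))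
    obtain ⟨x, hx, hx0⟩ := intermediate_value_Ioo' (le_of_lt hMB) hG₀c.continuousOn
      (Set.mem_Ioo.mpr ⟨hneg, by linarith⟩)
    have hFUx : FU x < 0 := by rw [hFU, hx0, zero_mul]; linarith
    have hFUM : 0 < FU M := by
      rw [hFU]
      linarith only [mul_le_mul hGM hG1M (by linarith) (by linarith : (0:ℝ) ≤ G₀ M), hyy]
    obtain ⟨ρ, hρ, hρ0⟩ := intermediate_value_Ioo' (le_of_lt hx.1) hFUc.continuousOn
      (Set.mem_Ioo.mpr ⟨hFUx, hFUM⟩)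
    rcases hβUroots ρ (by linarith [hρ.2, hx.2]) hρ0 with h'|h' <;>
      · rw [h'] at hρ; linarith [hρ.2, hx.2]
  -- algebra: Kt, a₁, b₁, b₀
  have hKtpos : 0 < Kt := by
    rcases lt_or_ge 0 K with h | h
    · have : 0 ≤ I / α := div_nonneg hI hα.le
      rw [hKt]; linarith
    · have hK0 : K = 0 := le_antisymm h hK
      have hIpos : 0 < I := by rw [hK0] at hKI; linarith
      have := div_pos hIpos hα
      rw [hKt, hK0]; linarith
  have hαKt : 0 < α * Kt := mul_pos hα hKtpos
  have hdenA : 0 < (r - μ₀ + l₀) * (r - μ₁ + l₁ + η) - l₀ * l₁ :=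
    thp_fact4a r μ₀ μ₁ l₀ l₁ η hl₀ hl₁ hμ₀ hμ₁ hη
  have ha₁pos : 0 < a₁ := by
    rw [ha₁]
    apply div_pos _ hdenA
    have h1 : 0 < r - μ₀ + l₀ := by linarith
    positivity
  have ha₁lt : a₁ < α := by
    rw [ha₁, div_lt_iff₀ hdenA]
    exact thp_fact4b r μ₀ μ₁ l₀ l₁ η α hl₀ hl₁ hμ₀ hμ₁ hη hα
  have hdenB : l₀ * l₁ - (r + l₀) * (r + l₁ + η) < 0 := thp_fact5 r l₀ l₁ η hr hl₀ hl₁ hη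
  have hb₁neg : b₁ < 0 := by
    rw [hb₁]
    apply div_neg_of_pos_of_neg _ hdenB
    positivity
  have hb₁gt : -(α * Kt) < b₁ := by
    rw [hb₁, lt_div_iff_of_neg hdenB]
    linarith only [thp_fact6 r l₀ l₁ η (α * Kt) hr hl₀ hl₁ hη hαKt]
  have hb₀l₀ : b₀ / l₀ < 0 := by
    apply div_neg_of_neg_of_pos _ hl₀
    rw [hb₀]
    apply div_neg_of_pos_of_neg _ hdenB
    positivity
  -- denominators D
  have hD₁pos : 0 < D₁ := by rw [hD₁]; linarith
  have hD₂pos : 0 < D₂ := by rw [hD₂]; linarith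
  have hD₃pos : 0 < D₃ := by rw [hD₃]; linarith
  have hDD₁ : 0 < D₁ * D₂ := mul_pos hD₁pos hD₂pos
  have hDD₃ : 0 < D₃ * D₂ := mul_pos hD₃pos hD₂pos
  -- numerator signs
  obtain ⟨nP1, nP2, nP3, nP4⟩ := thp_Pnums α a₁ βLA βLB βUA βUB hα ha₁pos ha₁lt hB1 hBord hUord hUA0
  obtain ⟨nQ1, nQ2, nQ3, nQ4⟩ :=
    thp_Qnums (α * Kt) b₁ βLA βLB βUA βUB hαKt hb₁gt hb₁neg hB1 hBord hUord hUA0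
  have hPLAneg : PLA < 0 := by rw [hPLA]; exact div_neg_of_neg_of_pos nP1 hDD₁
  have hPLBpos : 0 < PLB := by rw [hPLB]; exact div_pos nP2 hDD₁
  have hPUApos : 0 < PUA := by rw [hPUA]; exact div_pos nP3 hDD₃
  have hPUBneg : PUB < 0 := by rw [hPUB]; exact div_neg_of_neg_of_pos nP4 hDD₃
  have hQLApos : 0 < QLA := by rw [hQLA]; exact div_pos nQ1 hDD₁
  have hQLBneg : QLB < 0 := by rw [hQLB]; exact div_neg_of_neg_of_pos nQ2 hDD₁
  have hQUAneg : QUA < 0 := by rw [hQUA]; exact div_neg_of_neg_of_pos nQ3 hDD₃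
  have hQUBpos : 0 < QUB := by rw [hQUB]; exact div_pos nQ4 hDD₃
  -- summands
  have s1 : 0 < (1 - βLA) * PLA / G₀ βLA :=
    div_pos (mul_pos_of_neg_of_neg (by linarith) hPLAneg) hGLA
  have s2 : 0 < (1 - βLB) * PLB / G₀ βLB :=
    div_pos_of_neg_of_neg (mul_neg_of_neg_of_pos (by linarith) hPLBpos) hGLB
  have s3 : 0 < (βUA - 1) * PUA / G₀ βUA :=
    div_pos_of_neg_of_neg (mul_neg_of_neg_of_pos (by linarith) hPUApos) hGUA
  have s4 : 0 < (βUB - 1) * PUB / G₀ βUB :=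
    div_pos (mul_pos_of_neg_of_neg (by linarith) hPUBneg) hGUB
  have t1 : (1 - βLA) * QLA / G₀ βLA < 0 :=
    div_neg_of_neg_of_pos (mul_neg_of_neg_of_pos (by linarith) hQLApos) hGLA
  have t2 : (1 - βLB) * QLB / G₀ βLB < 0 :=
    div_neg_of_pos_of_neg (mul_pos_of_neg_of_neg (by linarith) hQLBneg) hGLB
  have t3 : (βUA - 1) * QUA / G₀ βUA < 0 :=
    div_neg_of_pos_of_neg (mul_pos_of_neg_of_neg (by linarith) hQUAneg) hGUA
  have t4 : (βUB - 1) * QUB / G₀ βUB < 0 :=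
    div_neg_of_neg_of_pos (mul_neg_of_neg_of_pos (by linarith) hQUBpos) hGUB
  have hPpos : 0 < P := by rw [hP]; linarith
  have hQneg : Q < 0 := by rw [hQ]; linarith
  exact ⟨s1, s2, s3, s4, hPpos, t1, t2, t3, t4, hb₀l₀, hQneg,
    div_pos (by linarith) hPpos⟩
end

section
/- Let x* > 0 and let V₀, V₁ : (0,∞) → ℝ be twice continuously differentiable functions with V_i(x) → 0 as x → 0⁺ (i = 0,1), satisfying: (i) −rV₀(x) + μ₀xV₀′(x) + (1/2)σ₀²x²V₀″(x) + λ₀(V₁(x)−V₀(x)) = 0 for all x > 0; (ii) −rV₁(x) + μ₁xV₁′(x) + (1/2)σ₁²x²V₁″(x) + λ₁(V₀(x)−V₁(x)) = 0 for 0 < x < x*; (iii) −rV₁(x) + μ₁xV₁′(x) + (1/2)σ₁²x²V₁″(x) + λ₁(V₀(x)−V₁(x)) + η(π̃(x)−V₁(x)) = 0 for x > x*; (iv) V₁(x*) = π̃(x*); and (v) there exists M > 0 with V_i(x) > 0 for all x > M and i = 0,1. Then V₀(x) ≥ 0 and V₁(x) ≥ 0 for all x > 0; in particular π̃(x*) ≥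 0, i.e. x* ≥ K̃. -/
open Filter Set

lemma second_deriv_nonneg_at_localmin {f : ℝ → ℝ} {x₀ : ℝ}
    (hfd : ∀ᶠ x in nhds x₀, DifferentiableAt ℝ f x)
    (hfd2 : ∀ᶠ x in nhds x₀, DifferentiableAt ℝ (deriv f) x)
    (hcont : ContinuousAt (deriv (deriv f)) x₀)
    (hmin : IsLocalMin f x₀) : 0 ≤ deriv (deriv f) x₀ := by
  by_contra hneg
  push_neg at hneg
  have h1 : deriv f x₀ = 0 := hmin.deriv_eq_zero
  have hev : ∀ᶠ x in nhds x₀, deriv (deriv f) x < 0 :=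
    Filter.Tendsto.eventually_lt_const hneg hcont
  have hminev : ∀ᶠ x in nhds x₀, f x₀ ≤ f x := hmin
  have hall := (hfd.and hfd2).and (hev.and hminev)
  rw [Metric.eventually_nhds_iff_ball] at hall
  obtain ⟨ε, hε, hball⟩ := hall
  have hball' : ∀ x ∈ Ioo (x₀ - ε) (x₀ + ε),
      (DifferentiableAt ℝ f x ∧ DifferentiableAt ℝ (deriv f) x) ∧
      (deriv (deriv f) x < 0 ∧ f x₀ ≤ f x) := by
    intro x hx
    exact hball x (by rw [Real.ball_eq_Ioo]; exact hx)
  have hsub : Ico x₀ (x₀ + ε) ⊆ Ioo (x₀ - ε) (x₀ + ε) :=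
    fun y hy => ⟨by linarith [hy.1], hy.2⟩
  have anti1 : StrictAntiOn (deriv f) (Ioo (x₀ - ε) (x₀ + ε)) := by
    apply strictAntiOn_of_deriv_neg (convex_Ioo _ _)
    · intro y hy; exact ((hball' y hy).1.2).continuousAt.continuousWithinAt
    · intro y hy; rw [interior_Ioo] at hy; exact (hball' y hy).2.1
  have anti2 : StrictAntiOn f (Ico x₀ (x₀ + ε)) := by
    apply strictAntiOn_of_deriv_neg (convex_Ico _ _)
    · intro y hy; exact ((hball' y (hsub hy)).1.1).continuousAt.continuousWithinAt
    · intro y hy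
      rw [interior_Ico] at hy
      have hy1 : deriv f y < deriv f x₀ :=
        anti1 ⟨by linarith, by linarith⟩ (hsub ⟨le_of_lt hy.1, hy.2⟩) hy.1
      rw [h1] at hy1; exact hy1
  have hy : x₀ + ε / 2 ∈ Ico x₀ (x₀ + ε) := ⟨by linarith, by linarith⟩
  have hlt := anti2 ⟨le_refl _, by linarith⟩ hy (by linarith)
  have hge := (hball' (x₀ + ε / 2) (hsub hy)).2.2
  linarith

set_option maxHeartbeats 1000000 in
/-- A maximum-principle-type result: any `C²` pair `(V₀, V₁)` on `(0,∞)`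
vanishing at `0⁺`, solving the variational ODE system with payoff `π̃(x) = αx - αK̃`
and free boundary `x*`, eventually positive at infinity, must be nonnegative on all
of `(0,∞)`; in particular `π̃(x*) ≥ 0`, i.e. `x* ≥ K̃`. -/
theorem nonnegativity_of_VI_solution
    (r μ₀ μ₁ σ₀ σ₁ l₀ l₁ η : ℝ)
    (hσ₀ : 0 < σ₀) (hσ₁ : 0 < σ₁) (hl₀ : 0 < l₀) (hl₁ : 0 < l₁)
    (hη : 0 < η) (hr : 0 < r)
    (α Kt : ℝ) (hα : 0 < α) (hKt : 0 < Kt)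
    (xstar : ℝ) (hxstar : 0 < xstar)
    (V₀ V₁ : ℝ → ℝ)
    (hC₀ : ContDiffOn ℝ 2 V₀ (Ioi (0:ℝ)))
    (hC₁ : ContDiffOn ℝ 2 V₁ (Ioi (0:ℝ)))
    (hlim₀ : Tendsto V₀ (nhdsWithin 0 (Ioi (0:ℝ))) (nhds 0))
    (hlim₁ : Tendsto V₁ (nhdsWithin 0 (Ioi (0:ℝ))) (nhds 0))
    (hODE₀ : ∀ x : ℝ, 0 < x →
      -r * V₀ x + μ₀ * x * deriv V₀ x + (1/2) * σ₀^2 * x^2 * deriv (deriv V₀) x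
        + l₀ * (V₁ x - V₀ x) = 0)
    (hODE₁L : ∀ x : ℝ, 0 < x → x < xstar →
      -r * V₁ x + μ₁ * x * deriv V₁ x + (1/2) * σ₁^2 * x^2 * deriv (deriv V₁) x
        + l₁ * (V₀ x - V₁ x) = 0)
    (hODE₁U : ∀ x : ℝ, xstar < x →
      -r * V₁ x + μ₁ * x * deriv V₁ x + (1/2) * σ₁^2 * x^2 * deriv (deriv V₁) x
        + l₁ * (V₀ x - V₁ x) + η * ((α * x - α * Kt) - V₁ x) = 0)
    (hbc : V₁ xstar = α * xstar - α * Kt)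
    (hpos : ∃ M : ℝ, 0 < M ∧ ∀ x : ℝ, M < x → 0 < V₀ x ∧ 0 < V₁ x) :
    (∀ x : ℝ, 0 < x → 0 ≤ V₀ x ∧ 0 ≤ V₁ x) ∧
    0 ≤ α * xstar - α * Kt ∧ Kt ≤ xstar := by
  have hO : IsOpen (Ioi (0:ℝ)) := isOpen_Ioi
  -- continuity facts
  have hc0 : ContinuousOn V₀ (Ioi (0:ℝ)) := hC₀.continuousOn
  have hc1 : ContinuousOn V₁ (Ioi (0:ℝ)) := hC₁.continuousOn
  have hC₁d : ContDiffOn ℝ 1 (deriv V₁) (Ioi (0:ℝ)) :=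
    hC₁.deriv_of_isOpen hO (by norm_num)
  have hd1 : ContinuousOn (deriv V₁) (Ioi (0:ℝ)) :=
    hC₁.continuousOn_deriv_of_isOpen hO (by norm_num)
  have hdd1 : ContinuousOn (deriv (deriv V₁)) (Ioi (0:ℝ)) :=
    hC₁d.continuousOn_deriv_of_isOpen hO (le_refl 1)
  -- extended left ODE up to x = xstar
  have hODE₁L' : ∀ x : ℝ, 0 < x → x ≤ xstar →
      -r * V₁ x + μ₁ * x * deriv V₁ x + (1/2) * σ₁^2 * x^2 * deriv (deriv V₁) x
        + l₁ * (V₀ x - V₁ x) = 0 := by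
    intro x hx hle
    rcases lt_or_eq_of_le hle with h | h
    · exact hODE₁L x hx h
    · subst h
      have hFcont : ContinuousOn (fun x : ℝ => -r * V₁ x + μ₁ * x * deriv V₁ x
          + (1/2) * σ₁^2 * x^2 * deriv (deriv V₁) x + l₁ * (V₀ x - V₁ x)) (Ioi (0:ℝ)) := by
        apply ContinuousOn.add
        apply ContinuousOn.add
        apply ContinuousOn.add
        · exact continuousOn_const.mul hc1
        · exact (continuousOn_const.mul continuousOn_id).mul hd1
        · exact (continuousOn_const.mul (continuousOn_id.pow 2)).mul hdd1
        · exact continuousOn_const.mul (hc0.sub hc1)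
      have hne : (nhdsWithin x (Ioo 0 x)).NeBot := by
        rw [← mem_closure_iff_nhdsWithin_neBot, closure_Ioo (ne_of_lt hx)]
        exact ⟨le_of_lt hx, le_refl _⟩
      have t1 : Tendsto (fun x : ℝ => -r * V₁ x + μ₁ * x * deriv V₁ x
          + (1/2) * σ₁^2 * x^2 * deriv (deriv V₁) x + l₁ * (V₀ x - V₁ x))
          (nhdsWithin x (Ioo 0 x)) (nhds (-r * V₁ x + μ₁ * x * deriv V₁ x
          + (1/2) * σ₁^2 * x^2 * deriv (deriv V₁) x + l₁ * (V₀ x - V₁ x))) :=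
        ((hFcont x (mem_Ioi.mpr hx)).mono (fun y hy => hy.1)).tendsto
      have t2 : Tendsto (fun x : ℝ => -r * V₁ x + μ₁ * x * deriv V₁ x
          + (1/2) * σ₁^2 * x^2 * deriv (deriv V₁) x + l₁ * (V₀ x - V₁ x))
          (nhdsWithin x (Ioo 0 x)) (nhds 0) := by
        apply Tendsto.congr' _ tendsto_const_nhds
        exact eventually_of_mem self_mem_nhdsWithin
          (fun y hy => (hODE₁L y hy.1 hy.2).symm)
      exact tendsto_nhds_unique t1 t2
  -- main nonnegativity
  have key : ∀ x : ℝ, 0 < x → 0 ≤ V₀ x ∧ 0 ≤ V₁ x := by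
    by_contra hcon
    push_neg at hcon
    obtain ⟨xb, hxb, hxbneg⟩ := hcon
    have hmb : min (V₀ xb) (V₁ xb) < 0 := by
      rcases lt_or_ge (V₀ xb) 0 with h | h
      · exact lt_of_le_of_lt (min_le_left _ _) h
      · exact lt_of_le_of_lt (min_le_right _ _) (hxbneg h)
    set mb := min (V₀ xb) (V₁ xb) with hmbdef
    have hmb2 : mb / 2 < 0 := by linarith
    have hev : ∀ᶠ x in nhdsWithin 0 (Ioi (0:ℝ)), mb / 2 < V₀ x ∧ mb / 2 < V₁ x :=
      (hlim₀.eventually (eventually_gt_nhds hmb2)).and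
        (hlim₁.eventually (eventually_gt_nhds hmb2))
    obtain ⟨δ, hδpos, hδ⟩ := (nhdsGT_basis (0:ℝ)).eventually_iff.mp hev
    obtain ⟨M, hM, hMpos⟩ := hpos
    set d := min δ xb with hd
    set b := max xb (M + 1) with hb
    have hdpos : 0 < d := lt_min hδpos hxb
    have hxbK : xb ∈ Icc d b := ⟨min_le_right _ _, le_max_left _ _⟩
    have hKsub : Icc d b ⊆ Ioi (0:ℝ) := fun y hy => lt_of_lt_of_le hdpos hy.1
    have hgcont : ContinuousOn (fun x => min (V₀ x) (V₁ x)) (Icc d b) :=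
      continuous_min.comp_continuousOn ((hc0.mono hKsub).prodMk (hc1.mono hKsub))
    obtain ⟨x₀, hx₀K, hx₀min⟩ :=
      isCompact_Icc.exists_isMinOn ⟨xb, hxbK⟩ hgcont
    rw [isMinOn_iff] at hx₀min
    have hx₀pos : 0 < x₀ := hKsub hx₀K
    have hm : min (V₀ x₀) (V₁ x₀) ≤ mb := hx₀min xb hxbK
    set m := min (V₀ x₀) (V₁ x₀) with hmdef
    have hmneg : m < 0 := lt_of_le_of_lt hm hmb
    have hglobal : ∀ y : ℝ, 0 < y → m ≤ min (V₀ y) (V₁ y) := by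
      intro y hy
      rcases lt_or_ge y d with h | h
      · have hδy := hδ (show y ∈ Ioo 0 δ from ⟨hy, lt_of_lt_of_le h (min_le_left _ _)⟩)
        have hlt : mb / 2 < min (V₀ y) (V₁ y) := lt_min hδy.1 hδy.2
        linarith
      · rcases le_or_gt y b with h' | h'
        · exact hx₀min y ⟨h, h'⟩
        · have hMy : M < y := lt_of_le_of_lt (le_trans (by linarith) (le_max_right xb (M+1))) h'
          have hp := hMpos y hMy
          have hlt : 0 < min (V₀ y) (V₁ y) := lt_min hp.1 hp.2
          linarith
    have hV₀ge : ∀ y : ℝ, 0 < y → m ≤ V₀ y :=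
      fun y hy => le_trans (hglobal y hy) (min_le_left _ _)
    have hV₁ge : ∀ y : ℝ, 0 < y → m ≤ V₁ y :=
      fun y hy => le_trans (hglobal y hy) (min_le_right _ _)
    have hmemev : ∀ᶠ x in nhds x₀, x ∈ Ioi (0:ℝ) :=
      eventually_of_mem (hO.mem_nhds hx₀pos) (fun y hy => hy)
    have hsd : ∀ (f : ℝ → ℝ), ContDiffOn ℝ 2 f (Ioi (0:ℝ)) → f x₀ = m →
        (∀ y : ℝ, 0 < y → m ≤ f y) →
        deriv f x₀ = 0 ∧ 0 ≤ deriv (deriv f) x₀ := by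
      intro f hCf he hge
      have hmin : IsLocalMin f x₀ := by
        apply hmemev.mono
        intro y hy
        rw [he]
        exact hge y hy
      have hfd : ∀ᶠ x in nhds x₀, DifferentiableAt ℝ f x := by
        apply hmemev.mono
        intro y hy
        exact (hCf.contDiffAt (hO.mem_nhds hy)).differentiableAt (by norm_num)
      have hCfd : ContDiffOn ℝ 1 (deriv f) (Ioi (0:ℝ)) := hCf.deriv_of_isOpen hO (by norm_num)
      have hfd2 : ∀ᶠ x in nhds x₀, DifferentiableAt ℝ (deriv f) x := by
        apply hmemev.mono
        intro y hy
        exact (hCfd.contDiffAt (hO.mem_nhds hy)).differentiableAt one_ne_zero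
      have hddc : ContinuousAt (deriv (deriv f)) x₀ :=
        (hCfd.continuousOn_deriv_of_isOpen hO (le_refl 1)).continuousAt (hO.mem_nhds hx₀pos)
      exact ⟨hmin.deriv_eq_zero, second_deriv_nonneg_at_localmin hfd hfd2 hddc hmin⟩
    rcases le_or_gt (V₀ x₀) (V₁ x₀) with hcase | hcase
    · -- V₀ attains the minimum
      have he : V₀ x₀ = m := (min_eq_left hcase).symm
      obtain ⟨hD1, hD2⟩ := hsd V₀ hC₀ he hV₀ge
      have hode := hODE₀ x₀ hx₀pos
      rw [hD1, he] at hode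
      have h1 : 0 ≤ (1/2) * σ₀^2 * x₀^2 * deriv (deriv V₀) x₀ :=
        mul_nonneg (by positivity) hD2
      have h2 : 0 ≤ l₀ * (V₁ x₀ - m) :=
        mul_nonneg (le_of_lt hl₀) (by linarith [hV₁ge x₀ hx₀pos])
      nlinarith [mul_pos hr (neg_pos.mpr hmneg)]
    · -- V₁ attains the minimum
      have he : V₁ x₀ = m := (min_eq_right (le_of_lt hcase)).symm
      obtain ⟨hD1, hD2⟩ := hsd V₁ hC₁ he hV₁ge
      have h1 : 0 ≤ (1/2) * σ₁^2 * x₀^2 * deriv (deriv V₁) x₀ :=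
        mul_nonneg (by positivity) hD2
      have h2 : 0 ≤ l₁ * (V₀ x₀ - m) :=
        mul_nonneg (le_of_lt hl₁) (by linarith [hV₀ge x₀ hx₀pos])
      rcases le_or_gt x₀ xstar with hx | hx
      · have hode := hODE₁L' x₀ hx₀pos hx
        rw [hD1, he] at hode
        nlinarith [mul_pos hr (neg_pos.mpr hmneg)]
      · have hode := hODE₁U x₀ hx
        rw [hD1, he] at hode
        have h3 : 0 ≤ η * ((α * x₀ - α * Kt) - m) := by
          apply mul_nonneg (le_of_lt hη)
          have h4 : m ≤ V₁ xstar := hV₁ge xstar hxstar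
          nlinarith [mul_pos hα (sub_pos.mpr hx)]
        nlinarith [mul_pos hr (neg_pos.mpr hmneg)]
  refine ⟨key, ?_, ?_⟩
  · rw [← hbc]; exact (key xstar hxstar).2
  · have h := (key xstar hxstar).2
    rw [hbc] at h
    nlinarith
end

section
/- In the geometric-Brownian-motion case, the numbers β^L_A = m + √(m² + 2(λ₀+λ₁+r)/σ²) and β^L_B = m + √(m² + 2r/σ²) satisfy F^L(β^L_A) = F^L(β^L_B) = 0 and β^L_A > β^L_B > 1, and moreover G^L_0(β^L_A) = λ₁ and G^L_0(β^L_B) = −λ₀. -/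
open Real

/-- In the GBM case, `β^L_A = m + √(m² + 2(λ₀+λ₁+r)/σ²)` and
`β^L_B = m + √(m² + 2r/σ²)` are roots of `F^L`, satisfy `β^L_A > β^L_B > 1`, and
`G^L_0(β^L_A) = λ₁`, `G^L_0(β^L_B) = -λ₀`. -/
theorem gbm_betaL_roots
    (r μ σ l₀ l₁ : ℝ)
    (hσ : 0 < σ) (hl₀ : 0 < l₀) (hl₁ : 0 < l₁) (hr : 0 < r) (hrμ : μ < r)
    (G₀ G₁ : ℝ → ℝ)
    (hG₀ : ∀ β, G₀ β = (1/2) * σ^2 * β * (β - 1) + μ * β - (l₀ + r))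
    (hG₁ : ∀ β, G₁ β = (1/2) * σ^2 * β * (β - 1) + μ * β - (l₁ + r))
    (F : ℝ → ℝ) (hF : ∀ β, F β = G₀ β * G₁ β - l₀ * l₁)
    (m : ℝ) (hm : m = 1/2 - μ / σ^2)
    (βLA βLB : ℝ)
    (hβLA : βLA = m + Real.sqrt (m^2 + 2 * (l₀ + l₁ + r) / σ^2))
    (hβLB : βLB = m + Real.sqrt (m^2 + 2 * r / σ^2)) :
    F βLA = 0 ∧ F βLB = 0 ∧ βLB < βLA ∧ 1 < βLB ∧
    G₀ βLA = l₁ ∧ G₀ βLB = -l₀ := by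
  have hs : (0:ℝ) < σ^2 := by positivity
  set A := Real.sqrt (m^2 + 2 * (l₀ + l₁ + r) / σ^2) with hA
  set B := Real.sqrt (m^2 + 2 * r / σ^2) with hB
  have hAarg : (0:ℝ) ≤ m^2 + 2 * (l₀ + l₁ + r) / σ^2 := by positivity
  have hBarg : (0:ℝ) ≤ m^2 + 2 * r / σ^2 := by positivity
  have hA2 : A^2 = m^2 + 2 * (l₀ + l₁ + r) / σ^2 := Real.sq_sqrt hAarg
  have hB2 : B^2 = m^2 + 2 * r / σ^2 := Real.sq_sqrt hBarg
  have hA0 : 0 ≤ A := Real.sqrt_nonneg _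
  have hB0 : 0 ≤ B := Real.sqrt_nonneg _
  have hA2' : A^2 * σ^2 = m^2 * σ^2 + 2 * (l₀ + l₁ + r) := by
    field_simp at hA2; linarith
  have hB2' : B^2 * σ^2 = m^2 * σ^2 + 2 * r := by
    field_simp at hB2; linarith
  have hm' : m * σ^2 = σ^2 / 2 - μ := by
    rw [hm]; field_simp
  have hGA0 : G₀ βLA = l₁ := by
    rw [hG₀, hβLA]; linear_combination (1/2) * hA2' + (m + A) * hm'
  have hGA1 : G₁ βLA = l₀ := by
    rw [hG₁, hβLA]; linear_combination (1/2) * hA2' + (m + A) * hm'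
  have hGB0 : G₀ βLB = -l₀ := by
    rw [hG₀, hβLB]; linear_combination (1/2) * hB2' + (m + B) * hm'
  have hGB1 : G₁ βLB = -l₁ := by
    rw [hG₁, hβLB]; linear_combination (1/2) * hB2' + (m + B) * hm'
  have hAB : βLB < βLA := by
    rw [hβLA, hβLB]
    have : B < A := Real.sqrt_lt_sqrt hBarg (by gcongr m ^ 2 + ?_ / σ ^ 2; linarith)
    linarith
  have h1B : 1 < βLB := by
    rw [hβLB]
    have hm2 : 1 - 2*m = 2 * (μ / σ^2) := by rw [hm]; ring
    have hrr : μ / σ^2 < r / σ^2 := by gcongr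
    have : (1 - m) < B := Real.lt_sqrt_of_sq_lt (by nlinarith)
    linarith
  refine ⟨?_, ?_, hAB, h1B, hGA0, hGB0⟩
  · rw [hF, hGA0, hGA1]; ring
  · rw [hF, hGB0, hGB1]; ring
end

section
/- In the geometric-Brownian-motion case, one has (λ₀+λ₁+η)² − 4λ₀η > 0, and the numbers β^U_A = m − √(m² + (λ₀+λ₁+η+2r − √((λ₀+λ₁+η)²−4λ₀η))/σ²) and β^U_B = m − √(m² + (λ₀+λ₁+η+2r + √((λ₀+λ₁+η)²−4λ₀η))/σ²) satisfy F^U(β^U_A) = F^U(β^U_B) = 0 and β^U_B < β^U_A < 0. -/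
open Real

/-- In the GBM case, `(λ₀+λ₁+η)² - 4λ₀η > 0`, and
`β^U_A = m - √(m² + (λ₀+λ₁+η+2r - √((λ₀+λ₁+η)²-4λ₀η))/σ²)` and
`β^U_B = m - √(m² + (λ₀+λ₁+η+2r + √((λ₀+λ₁+η)²-4λ₀η))/σ²)` are roots of `F^U`
with `β^U_B < β^U_A < 0`. -/
theorem gbm_betaU_roots
    (r μ σ l₀ l₁ η : ℝ)
    (hσ : 0 < σ) (hl₀ : 0 < l₀) (hl₁ : 0 < l₁) (hη : 0 < η)
    (hr : 0 < r) (hrμ : μ < r)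
    (G₀ G₁ : ℝ → ℝ)
    (hG₀ : ∀ β, G₀ β = (1/2) * σ^2 * β * (β - 1) + μ * β - (l₀ + r))
    (hG₁ : ∀ β, G₁ β = (1/2) * σ^2 * β * (β - 1) + μ * β - (l₁ + r + η))
    (F : ℝ → ℝ) (hF : ∀ β, F β = G₀ β * G₁ β - l₀ * l₁)
    (m : ℝ) (hm : m = 1/2 - μ / σ^2)
    (βUA βUB : ℝ)
    (hβUA : βUA = m - Real.sqrt (m^2 +
      (l₀ + l₁ + η + 2 * r - Real.sqrt ((l₀ + l₁ + η)^2 - 4 * l₀ * η)) / σ^2))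
    (hβUB : βUB = m - Real.sqrt (m^2 +
      (l₀ + l₁ + η + 2 * r + Real.sqrt ((l₀ + l₁ + η)^2 - 4 * l₀ * η)) / σ^2)) :
    (l₀ + l₁ + η)^2 - 4 * l₀ * η > 0 ∧
    F βUA = 0 ∧ F βUB = 0 ∧ βUB < βUA ∧ βUA < 0 := by
  have hσ2 : (0:ℝ) < σ^2 := by positivity
  have hσ2' : σ^2 ≠ 0 := ne_of_gt hσ2
  have hD : (0:ℝ) < (l₀ + l₁ + η)^2 - 4 * l₀ * η := by nlinarith [sq_nonneg (l₀ - η)]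
  set s := Real.sqrt ((l₀ + l₁ + η)^2 - 4 * l₀ * η) with hs
  have hs_sq : s^2 = (l₀ + l₁ + η)^2 - 4 * l₀ * η := Real.sq_sqrt hD.le
  have hs_nonneg : 0 ≤ s := Real.sqrt_nonneg _
  have hs_pos : 0 < s := Real.sqrt_pos.mpr hD
  have hsS : s < l₀ + l₁ + η := by nlinarith
  -- positivity of inner arguments
  have hPA : 0 < (l₀ + l₁ + η + 2 * r - s) / σ^2 := by
    apply div_pos _ hσ2; linarith
  have hPB : 0 < (l₀ + l₁ + η + 2 * r + s) / σ^2 := by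
    apply div_pos _ hσ2; linarith
  set a := Real.sqrt (m^2 + (l₀ + l₁ + η + 2 * r - s) / σ^2) with ha
  set b := Real.sqrt (m^2 + (l₀ + l₁ + η + 2 * r + s) / σ^2) with hb
  have ha_sq : a^2 = m^2 + (l₀ + l₁ + η + 2 * r - s) / σ^2 :=
    Real.sq_sqrt (by positivity)
  have hb_sq : b^2 = m^2 + (l₀ + l₁ + η + 2 * r + s) / σ^2 :=
    Real.sq_sqrt (by positivity)
  have ha_nonneg : 0 ≤ a := Real.sqrt_nonneg _
  have hb_nonneg : 0 ≤ b := Real.sqrt_nonneg _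
  have hm2 : μ = σ^2/2 - m * σ^2 := by
    rw [hm]; field_simp; ring
  have haσ : a^2 * σ^2 = m^2 * σ^2 + (l₀ + l₁ + η + 2 * r - s) := by
    rw [ha_sq]; field_simp
  have hbσ : b^2 * σ^2 = m^2 * σ^2 + (l₀ + l₁ + η + 2 * r + s) := by
    rw [hb_sq]; field_simp
  have hroot : ∀ q : ℝ, q = (l₀ + l₁ + η - s)/2 ∨ q = (l₀ + l₁ + η + s)/2 →
      (q - l₀) * (q - (l₁ + η)) - l₀ * l₁ = 0 := by
    rintro q (rfl | rfl) <;> linear_combination (1/4 : ℝ) * hs_sq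
  have hqA : (1/2) * σ^2 * βUA * (βUA - 1) + μ * βUA - r = (l₀ + l₁ + η - s)/2 := by
    rw [hβUA]
    linear_combination (m - a) * hm2 + (1/2 : ℝ) * haσ
  have hqB : (1/2) * σ^2 * βUB * (βUB - 1) + μ * βUB - r = (l₀ + l₁ + η + s)/2 := by
    rw [hβUB]
    linear_combination (m - b) * hm2 + (1/2 : ℝ) * hbσ
  refine ⟨hD, ?_, ?_, ?_, ?_⟩
  · rw [hF, hG₀, hG₁]
    linear_combination hroot ((1/2) * σ^2 * βUA * (βUA - 1) + μ * βUA - r) (Or.inl hqA)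
  · rw [hF, hG₀, hG₁]
    linear_combination hroot ((1/2) * σ^2 * βUB * (βUB - 1) + μ * βUB - r) (Or.inr hqB)
  · rw [hβUA, hβUB]
    have : a < b := by
      rw [ha, hb]
      apply Real.sqrt_lt_sqrt (by positivity)
      have h1 : (l₀ + l₁ + η + 2 * r - s) / σ^2 < (l₀ + l₁ + η + 2 * r + s) / σ^2 := by
        gcongr
        linarith
      linarith
    linarith
  · rw [hβUA]
    have : m < a := by nlinarith
    linarith
end

section
/- In the geometric-Brownian-motion case, as η → ∞: P^L_A(η) → α(1−β^L_B)/(β^L_A−β^L_B), Q^L_A(η) → αK̃β^L_B/(β^L_A−β^L_B), P^L_B(η) → α(β^L_A−1)/(β^L_A−β^L_B), Q^L_B(η) → −αK̃β^L_A/(β^L_A−β^L_B), and P^U_A(η) → 0, Q^U_A(η) → 0, P^U_B(η) → 0, Q^U_B(η) → 0. -/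
open Real Filter

private lemma sfun_diff {l₀ l₁ : ℝ} (hl₀ : 0 < l₀) (hl₁ : 0 < l₁) :
    Tendsto (fun η => l₀ + l₁ + η - Real.sqrt ((l₀ + l₁ + η)^2 - 4*l₀*η)) atTop
      (nhds (2*l₀)) := by
  have hrad : ∀ η : ℝ, (l₀+l₁+η)^2 - 4*l₀*η = (η+l₁-l₀)^2 + 4*(l₀*l₁) := fun η => by ring
  have hradnn : ∀ η : ℝ, 0 ≤ (l₀+l₁+η)^2 - 4*l₀*η := fun η => by nlinarith [sq_nonneg (η+l₁-l₀)]
  have hSge : ∀ η : ℝ, η + l₁ - l₀ ≤ Real.sqrt ((l₀+l₁+η)^2 - 4*l₀*η) := by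
    intro η
    rw [hrad η]
    calc η + l₁ - l₀ ≤ |η + l₁ - l₀| := le_abs_self _
    _ = Real.sqrt ((η+l₁-l₀)^2) := (Real.sqrt_sq_eq_abs _).symm
    _ ≤ _ := Real.sqrt_le_sqrt (by nlinarith)
  have hf : Tendsto (fun η : ℝ => η + l₁ - l₀) atTop atTop := by
    simpa [sub_eq_add_neg, add_assoc] using
      tendsto_atTop_add_const_right atTop (l₁ + -l₀) (tendsto_id (α := ℝ))
  have hT : Tendsto (fun η : ℝ => Real.sqrt ((l₀+l₁+η)^2 - 4*l₀*η) + (η + l₁ - l₀)) atTop atTop := by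
    apply tendsto_atTop_mono (fun η => ?_) hf
    have := Real.sqrt_nonneg ((l₀+l₁+η)^2 - 4*l₀*η)
    linarith
  have hq : Tendsto (fun η : ℝ => 4*(l₀*l₁) / (Real.sqrt ((l₀+l₁+η)^2 - 4*l₀*η) + (η+l₁-l₀)))
      atTop (nhds 0) := tendsto_const_nhds.div_atTop hT
  have heq : (fun η : ℝ => 2*l₀ - 4*(l₀*l₁) / (Real.sqrt ((l₀+l₁+η)^2 - 4*l₀*η) + (η+l₁-l₀)))
      =ᶠ[atTop] fun η => l₀ + l₁ + η - Real.sqrt ((l₀+l₁+η)^2 - 4*l₀*η) := by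
    filter_upwards [hT.eventually_gt_atTop 0] with η hTpos
    have hS2 : Real.sqrt ((l₀+l₁+η)^2 - 4*l₀*η) ^ 2 = (η+l₁-l₀)^2 + 4*(l₀*l₁) := by
      rw [Real.sq_sqrt (hradnn η), hrad η]
    have hTne : Real.sqrt ((l₀+l₁+η)^2 - 4*l₀*η) + (η+l₁-l₀) ≠ 0 := ne_of_gt hTpos
    rw [sub_eq_iff_eq_add, add_div' _ _ _ hTne, eq_div_iff hTne]
    nlinarith [hS2]
  have := Tendsto.congr' heq (tendsto_const_nhds.sub hq)
  simpa using this

set_option maxHeartbeats 1000000 in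
/-- In the GBM case, as `η → ∞`:
`P^L_A(η) → α(1-β^L_B)/(β^L_A-β^L_B)`, `Q^L_A(η) → αK̃β^L_B/(β^L_A-β^L_B)`,
`P^L_B(η) → α(β^L_A-1)/(β^L_A-β^L_B)`, `Q^L_B(η) → -αK̃β^L_A/(β^L_A-β^L_B)`,
and `P^U_A, Q^U_A, P^U_B, Q^U_B → 0`. -/
theorem asymptotics_eta_PQ
    (r μ σ l₀ l₁ α Kt : ℝ)
    (hσ : 0 < σ) (hl₀ : 0 < l₀) (hl₁ : 0 < l₁) (hr : 0 < r) (hrμ : μ < r)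
    (hα : 0 < α) (hKt : 0 < Kt)
    (m : ℝ) (hm : m = 1/2 - μ / σ^2)
    (βLA βLB : ℝ)
    (hβLA : βLA = m + Real.sqrt (m^2 + 2 * (l₀ + l₁ + r) / σ^2))
    (hβLB : βLB = m + Real.sqrt (m^2 + 2 * r / σ^2))
    (βUA βUB a₁ b₁ : ℝ → ℝ)
    (hβUA : ∀ η : ℝ, βUA η = m - Real.sqrt (m^2 +
      (l₀ + l₁ + η + 2 * r - Real.sqrt ((l₀ + l₁ + η)^2 - 4 * l₀ * η)) / σ^2))
    (hβUB : ∀ η : ℝ, βUB η = m - Real.sqrt (m^2 +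
      (l₀ + l₁ + η + 2 * r + Real.sqrt ((l₀ + l₁ + η)^2 - 4 * l₀ * η)) / σ^2))
    (ha₁ : ∀ η : ℝ, a₁ η = α * η * (r - μ + l₀) / ((r - μ + l₀) * (r - μ + l₁ + η) - l₀ * l₁))
    (hb₁ : ∀ η : ℝ, b₁ η = α * Kt * η * (r + l₀) / (l₀ * l₁ - (r + l₀) * (r + l₁ + η)))
    (D₁ : ℝ) (hD₁ : D₁ = βLA - βLB)
    (D₂ D₃ : ℝ → ℝ)
    (hD₂ : ∀ η : ℝ, D₂ η = βLA + βLB - βUA η - βUB η)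
    (hD₃ : ∀ η : ℝ, D₃ η = βUA η - βUB η)
    (PLA QLA PLB QLB PUA QUA PUB QUB : ℝ → ℝ)
    (hPLA : ∀ η : ℝ, PLA η = (α * (βLB - βUA η) * (-βLB + βUB η)
      + a₁ η * (βUA η - 1) * (βUB η - 1)) / (D₁ * D₂ η))
    (hQLA : ∀ η : ℝ, QLA η = (-(α * Kt) * (βLB - βUA η) * (-βLB + βUB η)
      + b₁ η * βUA η * βUB η) / (D₁ * D₂ η))
    (hPLB : ∀ η : ℝ, PLB η = (α * (βLA - βUA η) * (βLA - βUB η)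
      - a₁ η * (βUA η - 1) * (βUB η - 1)) / (D₁ * D₂ η))
    (hQLB : ∀ η : ℝ, QLB η = (-(α * Kt) * (βLA - βUA η) * (βLA - βUB η)
      - b₁ η * βUA η * βUB η) / (D₁ * D₂ η))
    (hPUA : ∀ η : ℝ, PUA η = (α * (βLA - βUB η) * (βLB - βUB η)
      + a₁ η * (βUB η - 1) * (βLA + βLB - βUB η - 1)) / (D₃ η * D₂ η))
    (hQUA : ∀ η : ℝ, QUA η = (-(α * Kt) * (βLA - βUB η) * (βLB - βUB η)
      + b₁ η * βUB η * (βLA + βLB - βUB η)) / (D₃ η * D₂ η))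
    (hPUB : ∀ η : ℝ, PUB η = (α * (βLA - βUA η) * (-βLB + βUA η)
      - a₁ η * (βUA η - 1) * (βLA + βLB - βUA η - 1)) / (D₃ η * D₂ η))
    (hQUB : ∀ η : ℝ, QUB η = (-(α * Kt) * (βLA - βUA η) * (-βLB + βUA η)
      - b₁ η * βUA η * (βLA + βLB - βUA η)) / (D₃ η * D₂ η)) :
    Tendsto PLA atTop (nhds (α * (1 - βLB) / (βLA - βLB))) ∧
    Tendsto QLA atTop (nhds (α * Kt * βLB / (βLA - βLB))) ∧
    Tendsto PLB atTop (nhds (α * (βLA - 1) / (βLA - βLB))) ∧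
    Tendsto QLB atTop (nhds (-(α * Kt) * βLA / (βLA - βLB))) ∧
    Tendsto PUA atTop (nhds 0) ∧
    Tendsto QUA atTop (nhds 0) ∧
    Tendsto PUB atTop (nhds 0) ∧
    Tendsto QUB atTop (nhds 0) := by
  have hσ2 : (0:ℝ) < σ^2 := by positivity
  have hdiff := sfun_diff hl₀ hl₁
  -- limit of βUA
  have hu : Tendsto βUA atTop (nhds (m - Real.sqrt (m^2 + (2*l₀ + 2*r)/σ^2))) := by
    have h2 : Tendsto (fun η : ℝ => m^2 + ((l₀+l₁+η - Real.sqrt ((l₀+l₁+η)^2 - 4*l₀*η)) + 2*r)/σ^2)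
        atTop (nhds (m^2 + (2*l₀ + 2*r)/σ^2)) :=
      (((hdiff.add_const (2*r)).div_const (σ^2)).const_add (m^2))
    have h3 := ((Real.continuous_sqrt.tendsto _).comp h2).const_sub m
    refine h3.congr fun η => ?_
    rw [hβUA η, show m^2 + (l₀+l₁+η+2*r - Real.sqrt ((l₀+l₁+η)^2 - 4*l₀*η))/σ^2
      = m^2 + ((l₀+l₁+η - Real.sqrt ((l₀+l₁+η)^2 - 4*l₀*η)) + 2*r)/σ^2 from by ring]
    rfl
  -- limit of βUB
  have hv : Tendsto βUB atTop atBot := by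
    have h1 : Tendsto (fun η : ℝ => Real.sqrt (η/σ^2)) atTop atTop := by
      rw [tendsto_atTop]
      intro b
      filter_upwards [eventually_ge_atTop (σ^2 * b^2)] with η hη
      calc b ≤ |b| := le_abs_self b
      _ = Real.sqrt (b^2) := (Real.sqrt_sq_eq_abs b).symm
      _ ≤ Real.sqrt (η/σ^2) := Real.sqrt_le_sqrt (by rw [le_div_iff₀ hσ2]; nlinarith)
    have h2 : Tendsto (fun η : ℝ => m - Real.sqrt (η/σ^2)) atTop atBot :=
      tendsto_atBot_add_const_left _ m (tendsto_neg_atTop_atBot.comp h1)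
    apply tendsto_atBot_mono' _ _ h2
    filter_upwards [eventually_ge_atTop (0:ℝ)] with η hη
    rw [hβUB η]
    have hSnn := Real.sqrt_nonneg ((l₀+l₁+η)^2 - 4*l₀*η)
    have : Real.sqrt (η/σ^2) ≤ Real.sqrt (m^2 +
        (l₀ + l₁ + η + 2*r + Real.sqrt ((l₀+l₁+η)^2 - 4*l₀*η))/σ^2) := by
      apply Real.sqrt_le_sqrt
      have h6 : η/σ^2 ≤ (l₀ + l₁ + η + 2*r + Real.sqrt ((l₀+l₁+η)^2 - 4*l₀*η))/σ^2 := by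
        apply div_le_div_of_nonneg_right (by linarith) (le_of_lt hσ2) |>.trans_eq rfl
      nlinarith [sq_nonneg m]
    linarith
  -- limit of a₁
  have ha : Tendsto a₁ atTop (nhds α) := by
    have hc : (0:ℝ) < r - μ + l₀ := by linarith
    have hinv : Tendsto (fun η : ℝ => η⁻¹) atTop (nhds (0:ℝ)) := tendsto_inv_atTop_zero
    have hden : Tendsto (fun η : ℝ => (r-μ+l₀)*((r-μ+l₁)*η⁻¹+1) - (l₀*l₁)*η⁻¹) atTop
        (nhds ((r-μ+l₀)*((r-μ+l₁)*0+1) - (l₀*l₁)*0)) :=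
      (((hinv.const_mul _).add_const 1).const_mul _).sub (hinv.const_mul _)
    have hlim := (tendsto_const_nhds (x := α*(r-μ+l₀))).div hden (by simp; positivity)
    have heq : (fun η : ℝ => α*(r-μ+l₀) / ((r-μ+l₀)*((r-μ+l₁)*η⁻¹+1) - (l₀*l₁)*η⁻¹))
        =ᶠ[atTop] a₁ := by
      filter_upwards [eventually_gt_atTop (0:ℝ)] with η hη
      have hη0 : η ≠ 0 := ne_of_gt hη
      rw [ha₁ η]
      rw [show (r-μ+l₀)*((r-μ+l₁)*η⁻¹+1) - (l₀*l₁)*η⁻¹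
        = ((r-μ+l₀)*(r-μ+l₁+η) - l₀*l₁) * η⁻¹ from by field_simp; try ring]
      rw [mul_comm ((r-μ+l₀)*(r-μ+l₁+η) - l₀*l₁) η⁻¹, ← div_div,
        show α*(r-μ+l₀)/η⁻¹ = α*η*(r-μ+l₀) from by field_simp; try ring]
    have := Tendsto.congr' heq hlim
    have hval : α*(r-μ+l₀) / ((r-μ+l₀)*((r-μ+l₁)*0+1) - (l₀*l₁)*0) = α := by
      simp only [mul_zero, zero_add, mul_one, sub_zero]
      rw [mul_div_assoc, div_self hc.ne', mul_one]
    rwa [hval] at this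
  -- limit of b₁
  have hb : Tendsto b₁ atTop (nhds (-(α*Kt))) := by
    have hc : (0:ℝ) < r + l₀ := by linarith
    have hinv : Tendsto (fun η : ℝ => η⁻¹) atTop (nhds (0:ℝ)) := tendsto_inv_atTop_zero
    have hden : Tendsto (fun η : ℝ => (l₀*l₁)*η⁻¹ - (r+l₀)*((r+l₁)*η⁻¹+1)) atTop
        (nhds ((l₀*l₁)*0 - (r+l₀)*((r+l₁)*0+1))) :=
      (hinv.const_mul _).sub (((hinv.const_mul _).add_const 1).const_mul _)
    have hlim := (tendsto_const_nhds (x := α*Kt*(r+l₀))).div hden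
      (by simp only [mul_zero, zero_mul, zero_add, mul_one, zero_sub, ne_eq, neg_eq_zero]; positivity)
    have heq : (fun η : ℝ => α*Kt*(r+l₀) / ((l₀*l₁)*η⁻¹ - (r+l₀)*((r+l₁)*η⁻¹+1)))
        =ᶠ[atTop] b₁ := by
      filter_upwards [eventually_gt_atTop (0:ℝ)] with η hη
      have hη0 : η ≠ 0 := ne_of_gt hη
      rw [hb₁ η]
      rw [show (l₀*l₁)*η⁻¹ - (r+l₀)*((r+l₁)*η⁻¹+1)
        = (l₀*l₁ - (r+l₀)*(r+l₁+η)) * η⁻¹ from by field_simp; try ring]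
      rw [mul_comm (l₀*l₁ - (r+l₀)*(r+l₁+η)) η⁻¹, ← div_div,
        show α*Kt*(r+l₀)/η⁻¹ = α*Kt*η*(r+l₀) from by field_simp; try ring]
    have := Tendsto.congr' heq hlim
    have hval : α*Kt*(r+l₀) / ((l₀*l₁)*0 - (r+l₀)*((r+l₁)*0+1)) = -(α*Kt) := by
      have h2 : (-l₀ + -r : ℝ) ≠ 0 := by intro hh; nlinarith
      rw [show (l₀*l₁)*0 - (r+l₀)*((r+l₁)*0+1) = (-l₀ + -r) from by ring, div_eq_iff h2]
      ring
    rwa [hval] at this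
  -- βLA ≠ βLB
  have hD₁ne : βLA - βLB ≠ 0 := by
    have hβgt : βLB < βLA := by
      rw [hβLA, hβLB]
      have h1 : Real.sqrt (m^2 + 2*r/σ^2) < Real.sqrt (m^2 + 2*(l₀+l₁+r)/σ^2) := by
        apply Real.sqrt_lt_sqrt (by positivity)
        have h2 : 2*r/σ^2 < 2*(l₀+l₁+r)/σ^2 := by
          rw [div_lt_div_iff_of_pos_right hσ2]
          linarith
        linarith
      linarith
    exact sub_ne_zero.mpr (ne_of_gt hβgt)
  -- generalize the limit of βUA
  obtain ⟨uL, hu⟩ : ∃ x, Tendsto βUA atTop (nhds x) := ⟨_, hu⟩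
  -- 1/βUB → 0
  have hw : Tendsto (fun η => (βUB η)⁻¹) atTop (nhds 0) := by
    have h1 : Tendsto (fun η => -(βUB η)) atTop atTop := tendsto_neg_atBot_atTop.comp hv
    have h2 := h1.inv_tendsto_atTop
    have h3 := h2.neg
    rw [neg_zero] at h3
    refine h3.congr fun η => ?_
    show -((-βUB η)⁻¹) = _
    rw [inv_neg, neg_neg]
  have hvne : ∀ᶠ η in atTop, βUB η ≠ 0 :=
    (hv.eventually (eventually_lt_atBot 0)).mono fun η h => ne_of_lt h
  have hprod : Tendsto (fun η => (βUA η, (βUB η)⁻¹, a₁ η, b₁ η)) atTop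
      (nhds (uL, 0, α, -(α*Kt))) :=
    hu.prodMk_nhds (hw.prodMk_nhds (ha.prodMk_nhds hb))
  have tlim : ∀ f : ℝ × ℝ × ℝ × ℝ → ℝ, Continuous f →
      Tendsto (fun η => f (βUA η, (βUB η)⁻¹, a₁ η, b₁ η)) atTop (nhds (f (uL, 0, α, -(α*Kt)))) :=
    fun f hf => (hf.tendsto _).comp hprod
  have hdenL := tlim (fun q => D₁ * ((βLA + βLB - q.1) * q.2.1 - 1)) (by fun_prop)
  have hdenL0 : D₁ * ((βLA + βLB - uL) * 0 - 1) ≠ 0 := by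
    rw [hD₁]; intro h; apply hD₁ne; nlinarith [h]
  have hdenU := tlim (fun q => (q.1 * q.2.1 - 1) * ((βLA + βLB - q.1) * q.2.1 - 1)) (by fun_prop)
  have hdenU0 : (uL * 0 - 1) * ((βLA + βLB - uL) * 0 - 1) ≠ 0 := by norm_num
  refine ⟨?_, ?_, ?_, ?_, ?_, ?_, ?_, ?_⟩
  · -- PLA
    have hnum := tlim (fun q => α * (βLB - q.1) * (-βLB * q.2.1 + 1)
      + q.2.2.1 * (q.1 - 1) * (1 - q.2.1)) (by fun_prop)
    have heq : PLA =ᶠ[atTop] fun η =>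
        (α * (βLB - βUA η) * (-βLB * (βUB η)⁻¹ + 1) + a₁ η * (βUA η - 1) * (1 - (βUB η)⁻¹)) /
          (D₁ * ((βLA + βLB - βUA η) * (βUB η)⁻¹ - 1)) := by
      filter_upwards [hvne] with η hb0
      have hw0 : (βUB η)⁻¹ ≠ 0 := inv_ne_zero hb0
      rw [hPLA η, hD₂ η, ← mul_div_mul_right _ _ hw0]
      congr 1
      · field_simp [hb0]
        try ring
        try tauto
      · field_simp [hb0]
        try ring
        try tauto
    have h := Tendsto.congr' heq.symm (hnum.div hdenL hdenL0)
    have hval : (α * (βLB - uL) * (-βLB * 0 + 1) + α * (uL - 1) * (1 - 0)) /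
        (D₁ * ((βLA + βLB - uL) * 0 - 1)) = α * (1 - βLB) / (βLA - βLB) := by
      rw [div_eq_div_iff hdenL0 hD₁ne, hD₁]; ring
    rwa [hval] at h
  · -- QLA
    have hnum := tlim (fun q => -(α * Kt) * (βLB - q.1) * (-βLB * q.2.1 + 1)
      + q.2.2.2 * q.1) (by fun_prop)
    have heq : QLA =ᶠ[atTop] fun η =>
        (-(α * Kt) * (βLB - βUA η) * (-βLB * (βUB η)⁻¹ + 1) + b₁ η * βUA η) /
          (D₁ * ((βLA + βLB - βUA η) * (βUB η)⁻¹ - 1)) := by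
      filter_upwards [hvne] with η hb0
      have hw0 : (βUB η)⁻¹ ≠ 0 := inv_ne_zero hb0
      rw [hQLA η, hD₂ η, ← mul_div_mul_right _ _ hw0]
      congr 1
      · field_simp [hb0]
        try ring
        try tauto
      · field_simp [hb0]
        try ring
        try tauto
    have h := Tendsto.congr' heq.symm (hnum.div hdenL hdenL0)
    have hval : (-(α * Kt) * (βLB - uL) * (-βLB * 0 + 1) + -(α * Kt) * uL) /
        (D₁ * ((βLA + βLB - uL) * 0 - 1)) = α * Kt * βLB / (βLA - βLB) := by
      rw [div_eq_div_iff hdenL0 hD₁ne, hD₁]; ring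
    rwa [hval] at h
  · -- PLB
    have hnum := tlim (fun q => α * (βLA - q.1) * (βLA * q.2.1 - 1)
      - q.2.2.1 * (q.1 - 1) * (1 - q.2.1)) (by fun_prop)
    have heq : PLB =ᶠ[atTop] fun η =>
        (α * (βLA - βUA η) * (βLA * (βUB η)⁻¹ - 1) - a₁ η * (βUA η - 1) * (1 - (βUB η)⁻¹)) /
          (D₁ * ((βLA + βLB - βUA η) * (βUB η)⁻¹ - 1)) := by
      filter_upwards [hvne] with η hb0
      have hw0 : (βUB η)⁻¹ ≠ 0 := inv_ne_zero hb0
      rw [hPLB η, hD₂ η, ← mul_div_mul_right _ _ hw0]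
      congr 1
      · field_simp [hb0]
        try ring
        try tauto
      · field_simp [hb0]
        try ring
        try tauto
    have h := Tendsto.congr' heq.symm (hnum.div hdenL hdenL0)
    have hval : (α * (βLA - uL) * (βLA * 0 - 1) - α * (uL - 1) * (1 - 0)) /
        (D₁ * ((βLA + βLB - uL) * 0 - 1)) = α * (βLA - 1) / (βLA - βLB) := by
      rw [div_eq_div_iff hdenL0 hD₁ne, hD₁]; ring
    rwa [hval] at h
  · -- QLB
    have hnum := tlim (fun q => -(α * Kt) * (βLA - q.1) * (βLA * q.2.1 - 1)
      - q.2.2.2 * q.1) (by fun_prop)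
    have heq : QLB =ᶠ[atTop] fun η =>
        (-(α * Kt) * (βLA - βUA η) * (βLA * (βUB η)⁻¹ - 1) - b₁ η * βUA η) /
          (D₁ * ((βLA + βLB - βUA η) * (βUB η)⁻¹ - 1)) := by
      filter_upwards [hvne] with η hb0
      have hw0 : (βUB η)⁻¹ ≠ 0 := inv_ne_zero hb0
      rw [hQLB η, hD₂ η, ← mul_div_mul_right _ _ hw0]
      congr 1
      · field_simp [hb0]
        try ring
        try tauto
      · field_simp [hb0]
        try ring
        try tauto
    have h := Tendsto.congr' heq.symm (hnum.div hdenL hdenL0)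
    have hval : (-(α * Kt) * (βLA - uL) * (βLA * 0 - 1) - -(α * Kt) * uL) /
        (D₁ * ((βLA + βLB - uL) * 0 - 1)) = -(α * Kt) * βLA / (βLA - βLB) := by
      rw [div_eq_div_iff hdenL0 hD₁ne, hD₁]; ring
    rwa [hval] at h
  · -- PUA
    have hnum := tlim (fun q => α * (βLA * q.2.1 - 1) * (βLB * q.2.1 - 1)
      + q.2.2.1 * (1 - q.2.1) * ((βLA + βLB - 1) * q.2.1 - 1)) (by fun_prop)
    have heq : PUA =ᶠ[atTop] fun η =>
        (α * (βLA * (βUB η)⁻¹ - 1) * (βLB * (βUB η)⁻¹ - 1)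
          + a₁ η * (1 - (βUB η)⁻¹) * ((βLA + βLB - 1) * (βUB η)⁻¹ - 1)) /
        ((βUA η * (βUB η)⁻¹ - 1) * ((βLA + βLB - βUA η) * (βUB η)⁻¹ - 1)) := by
      filter_upwards [hvne] with η hb0
      have hw0 : (βUB η)⁻¹ * (βUB η)⁻¹ ≠ 0 := mul_ne_zero (inv_ne_zero hb0) (inv_ne_zero hb0)
      rw [hPUA η, hD₂ η, hD₃ η, ← mul_div_mul_right _ _ hw0]
      congr 1
      · field_simp [hb0]
        try ring
        try tauto
      · field_simp [hb0]
        try ring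
        try tauto
    have h := Tendsto.congr' heq.symm (hnum.div hdenU hdenU0)
    have hval : (α * (βLA * 0 - 1) * (βLB * 0 - 1) + α * (1 - 0) * ((βLA + βLB - 1) * 0 - 1)) /
        ((uL * 0 - 1) * ((βLA + βLB - uL) * 0 - 1)) = 0 := by
      rw [show α * (βLA * 0 - 1) * (βLB * 0 - 1) + α * (1 - 0) * ((βLA + βLB - 1) * 0 - 1) = 0
        from by ring, zero_div]
    rwa [hval] at h
  · -- QUA
    have hnum := tlim (fun q => -(α * Kt) * (βLA * q.2.1 - 1) * (βLB * q.2.1 - 1)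
      + q.2.2.2 * ((βLA + βLB) * q.2.1 - 1)) (by fun_prop)
    have heq : QUA =ᶠ[atTop] fun η =>
        (-(α * Kt) * (βLA * (βUB η)⁻¹ - 1) * (βLB * (βUB η)⁻¹ - 1)
          + b₁ η * ((βLA + βLB) * (βUB η)⁻¹ - 1)) /
        ((βUA η * (βUB η)⁻¹ - 1) * ((βLA + βLB - βUA η) * (βUB η)⁻¹ - 1)) := by
      filter_upwards [hvne] with η hb0
      have hw0 : (βUB η)⁻¹ * (βUB η)⁻¹ ≠ 0 := mul_ne_zero (inv_ne_zero hb0) (inv_ne_zero hb0)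
      rw [hQUA η, hD₂ η, hD₃ η, ← mul_div_mul_right _ _ hw0]
      congr 1
      · field_simp [hb0]
        try ring
        try tauto
      · field_simp [hb0]
        try ring
        try tauto
    have h := Tendsto.congr' heq.symm (hnum.div hdenU hdenU0)
    have hval : (-(α * Kt) * (βLA * 0 - 1) * (βLB * 0 - 1)
          + -(α * Kt) * ((βLA + βLB) * 0 - 1)) /
        ((uL * 0 - 1) * ((βLA + βLB - uL) * 0 - 1)) = 0 := by
      rw [show -(α * Kt) * (βLA * 0 - 1) * (βLB * 0 - 1)
          + -(α * Kt) * ((βLA + βLB) * 0 - 1) = 0 from by ring, zero_div]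
    rwa [hval] at h
  · -- PUB
    have hnum := tlim (fun q => (α * (βLA - q.1) * (-βLB + q.1)
      - q.2.2.1 * (q.1 - 1) * (βLA + βLB - q.1 - 1)) * q.2.1 * q.2.1) (by fun_prop)
    have heq : PUB =ᶠ[atTop] fun η =>
        ((α * (βLA - βUA η) * (-βLB + βUA η)
          - a₁ η * (βUA η - 1) * (βLA + βLB - βUA η - 1)) * (βUB η)⁻¹ * (βUB η)⁻¹) /
        ((βUA η * (βUB η)⁻¹ - 1) * ((βLA + βLB - βUA η) * (βUB η)⁻¹ - 1)) := by
      filter_upwards [hvne] with η hb0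
      have hw0 : (βUB η)⁻¹ * (βUB η)⁻¹ ≠ 0 := mul_ne_zero (inv_ne_zero hb0) (inv_ne_zero hb0)
      rw [hPUB η, hD₂ η, hD₃ η, ← mul_div_mul_right _ _ hw0]
      congr 1
      · field_simp [hb0]
        try ring
        try tauto
      · field_simp [hb0]
        try ring
        try tauto
    have h := Tendsto.congr' heq.symm (hnum.div hdenU hdenU0)
    have hval : ((α * (βLA - uL) * (-βLB + uL) - α * (uL - 1) * (βLA + βLB - uL - 1)) * 0 * 0) /
        ((uL * 0 - 1) * ((βLA + βLB - uL) * 0 - 1)) = 0 := by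
      rw [mul_zero, zero_div]
    rwa [hval] at h
  · -- QUB
    have hnum := tlim (fun q => (-(α * Kt) * (βLA - q.1) * (-βLB + q.1)
      - q.2.2.2 * q.1 * (βLA + βLB - q.1)) * q.2.1 * q.2.1) (by fun_prop)
    have heq : QUB =ᶠ[atTop] fun η =>
        ((-(α * Kt) * (βLA - βUA η) * (-βLB + βUA η)
          - b₁ η * βUA η * (βLA + βLB - βUA η)) * (βUB η)⁻¹ * (βUB η)⁻¹) /
        ((βUA η * (βUB η)⁻¹ - 1) * ((βLA + βLB - βUA η) * (βUB η)⁻¹ - 1)) := by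
      filter_upwards [hvne] with η hb0
      have hw0 : (βUB η)⁻¹ * (βUB η)⁻¹ ≠ 0 := mul_ne_zero (inv_ne_zero hb0) (inv_ne_zero hb0)
      rw [hQUB η, hD₂ η, hD₃ η, ← mul_div_mul_right _ _ hw0]
      congr 1
      · field_simp [hb0]
        try ring
        try tauto
      · field_simp [hb0]
        try ring
        try tauto
    have h := Tendsto.congr' heq.symm (hnum.div hdenU hdenU0)
    have hval : ((-(α * Kt) * (βLA - uL) * (-βLB + uL)
          - -(α * Kt) * uL * (βLA + βLB - uL)) * 0 * 0) /
        ((uL * 0 - 1) * ((βLA + βLB - uL) * 0 - 1)) = 0 := by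
      rw [mul_zero, zero_div]
    rwa [hval] at h
end

section
/- In the geometric-Brownian-motion case, the limiting threshold x*_∞ = (r−μ+λ₀)·[(λ₀(β^L_A−ζ)β^L_B + λ₁(β^L_B−ζ)β^L_A)(r+λ₀) + ζ(β^L_A−β^L_B)λ₀λ₁]·K̃ / { (r+λ₀)·[(λ₀(β^L_A−ζ)(β^L_B−1) + λ₁(β^L_B−ζ)(β^L_A−1))(r−μ+λ₀) + (ζ−1)(β^L_A−β^L_B)λ₀λ₁] } satisfies x*_∞ ≥ (β^L_A/(β^L_A−1))·K̃ ≥ K̃. -/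
open Real

set_option maxHeartbeats 1000000

private lemma aux_gt_one (m d s : ℝ) (hs0 : 0 ≤ s) (hs2 : s^2 = m^2 + d)
    (hd : 1 - 2*m < d) : 1 < m + s := by nlinarith

private lemma aux_neg (m d s : ℝ) (hs0 : 0 ≤ s) (hs2 : s^2 = m^2 + d)
    (hd : 0 < d) : m - s < 0 := by nlinarith

/-- In the GBM case, the limiting threshold `x*_∞` satisfies
`x*_∞ ≥ (β^L_A/(β^L_A - 1))·K̃ ≥ K̃`. -/
theorem asymptotics_eta_threshold
    (r μ σ l₀ l₁ Kt : ℝ)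
    (hσ : 0 < σ) (hl₀ : 0 < l₀) (hl₁ : 0 < l₁) (hr : 0 < r) (hrμ : μ < r)
    (hKt : 0 < Kt)
    (m : ℝ) (hm : m = 1/2 - μ / σ^2)
    (βLA βLB ζ : ℝ)
    (hβLA : βLA = m + Real.sqrt (m^2 + 2 * (l₀ + l₁ + r) / σ^2))
    (hβLB : βLB = m + Real.sqrt (m^2 + 2 * r / σ^2))
    (hζ : ζ = m - Real.sqrt (m^2 + 2 * (l₀ + r) / σ^2))
    (xinf : ℝ)
    (hxinf : xinf = (r - μ + l₀) *
        ((l₀ * (βLA - ζ) * βLB + l₁ * (βLB - ζ) * βLA) * (r + l₀)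
          + ζ * (βLA - βLB) * l₀ * l₁) * Kt /
      ((r + l₀) *
        ((l₀ * (βLA - ζ) * (βLB - 1) + l₁ * (βLB - ζ) * (βLA - 1)) * (r - μ + l₀)
          + (ζ - 1) * (βLA - βLB) * l₀ * l₁))) :
    βLA / (βLA - 1) * Kt ≤ xinf ∧ Kt ≤ βLA / (βLA - 1) * Kt := by
  have hσ2 : (0:ℝ) < σ^2 := by positivity
  have hμ' : μ = (1/2 - m) * σ^2 := by
    rw [hm]; field_simp; ring
  obtain ⟨sA, hsA⟩ : ∃ x, Real.sqrt (m^2 + 2 * (l₀ + l₁ + r) / σ^2) = x := ⟨_, rfl⟩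
  obtain ⟨sB, hsB⟩ : ∃ x, Real.sqrt (m^2 + 2 * r / σ^2) = x := ⟨_, rfl⟩
  obtain ⟨sZ, hsZ⟩ : ∃ x, Real.sqrt (m^2 + 2 * (l₀ + r) / σ^2) = x := ⟨_, rfl⟩
  rw [hsA] at hβLA
  rw [hsB] at hβLB
  rw [hsZ] at hζ
  have hsA0 : 0 ≤ sA := hsA ▸ Real.sqrt_nonneg _
  have hsB0 : 0 ≤ sB := hsB ▸ Real.sqrt_nonneg _
  have hsZ0 : 0 ≤ sZ := hsZ ▸ Real.sqrt_nonneg _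
  have hsA2 : sA^2 = m^2 + 2 * (l₀ + l₁ + r) / σ^2 := by
    rw [← hsA]; exact Real.sq_sqrt (by positivity)
  have hsB2 : sB^2 = m^2 + 2 * r / σ^2 := by
    rw [← hsB]; exact Real.sq_sqrt (by positivity)
  have hsZ2 : sZ^2 = m^2 + 2 * (l₀ + r) / σ^2 := by
    rw [← hsZ]; exact Real.sq_sqrt (by positivity)
  have hsZ2' : sZ^2 * σ^2 = m^2 * σ^2 + 2 * (l₀ + r) := by
    rw [hsZ2]; field_simp
  -- A > 1
  have hdA : 1 - 2*m < 2 * (l₀ + l₁ + r) / σ^2 := by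
    have h1 : 2 * (l₀ + l₁ + r) / σ^2 + 2*m - 1 = 2*((l₀ + l₁ + r) - μ)/σ^2 := by
      rw [hm]; field_simp; ring
    have h2 : 0 < 2*((l₀ + l₁ + r) - μ)/σ^2 := div_pos (by linarith) hσ2
    linarith
  have hA1 : 1 < βLA := by
    rw [hβLA]; exact aux_gt_one m _ sA hsA0 hsA2 hdA
  -- B > 1
  have hdB : 1 - 2*m < 2 * r / σ^2 := by
    have h1 : 2 * r / σ^2 + 2*m - 1 = 2*(r - μ)/σ^2 := by
      rw [hm]; field_simp; ring
    have h2 : 0 < 2*(r - μ)/σ^2 := div_pos (by linarith) hσ2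
    linarith
  have hB1 : 1 < βLB := by
    rw [hβLB]; exact aux_gt_one m _ sB hsB0 hsB2 hdB
  -- A > B
  have hAB : βLB < βLA := by
    rw [hβLA, hβLB]
    have h1 : sB < sA := by
      rw [← hsA, ← hsB]
      apply Real.sqrt_lt_sqrt (by positivity)
      have h2 : 2 * r / σ^2 < 2 * (l₀ + l₁ + r) / σ^2 :=
        (div_lt_div_iff_of_pos_right hσ2).mpr (by linarith)
      linarith
    linarith
  -- ζ < 0
  have hz0 : ζ < 0 := by
    have hd : 0 < 2 * (l₀ + r) / σ^2 := by positivity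
    rw [hζ]
    exact aux_neg m _ sZ hsZ0 hsZ2 hd
  -- quadratic relation for ζ
  have hzq : σ^2/2 * ζ * (ζ - 1) + μ * ζ = l₀ + r := by
    rw [hζ]
    linear_combination (1/2) * hsZ2' + (m - sZ) * hμ'
  -- basic positivity
  have hp : 0 < r - μ + l₀ := by linarith
  have hq : 0 < r + l₀ := by linarith
  have hA1' : (0:ℝ) < βLA - 1 := by linarith
  have hB1' : (0:ℝ) < βLB - 1 := by linarith
  have hAz : 0 < βLA - ζ := by linarith
  have hBz : 0 < βLB - ζ := by linarith
  have hzz : 0 < ζ * (ζ - 1) := mul_pos_of_neg_of_neg hz0 (by linarith)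
  obtain ⟨Num, hNum⟩ : ∃ x, (r - μ + l₀) *
        ((l₀ * (βLA - ζ) * βLB + l₁ * (βLB - ζ) * βLA) * (r + l₀)
          + ζ * (βLA - βLB) * l₀ * l₁) = x := ⟨_, rfl⟩
  obtain ⟨Den, hDen⟩ : ∃ x, (r + l₀) *
        ((l₀ * (βLA - ζ) * (βLB - 1) + l₁ * (βLB - ζ) * (βLA - 1)) * (r - μ + l₀)
          + (ζ - 1) * (βLA - βLB) * l₀ * l₁) = x := ⟨_, rfl⟩
  rw [hNum, hDen] at hxinf
  obtain ⟨inr, hinr⟩ : ∃ x, (r - μ + l₀) * (r + l₀) * (βLA - ζ)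
      + l₁ * ((r + l₀) * (1 - ζ) + σ^2/2 * (ζ * (ζ - 1)) * (βLA - 1)) = x := ⟨_, rfl⟩
  -- denominator positivity
  have hDenPos : 0 < Den := by
    rw [← hDen]
    apply mul_pos hq
    have hBrId : (l₀ * (βLA - ζ) * (βLB - 1) + l₁ * (βLB - ζ) * (βLA - 1)) * (r - μ + l₀)
            + (ζ - 1) * (βLA - βLB) * l₀ * l₁
        = (l₀ + l₁) * (r - μ + l₀) * ((βLA - ζ) * (βLB - 1))
          + l₁ * (r - μ) * ((1 - ζ) * (βLA - βLB)) := by ring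
    rw [hBrId]
    have h1 : 0 < (l₀ + l₁) * (r - μ + l₀) * ((βLA - ζ) * (βLB - 1)) :=
      mul_pos (mul_pos (by linarith) hp) (mul_pos hAz hB1')
    have h2 : 0 < l₁ * (r - μ) * ((1 - ζ) * (βLA - βLB)) :=
      mul_pos (mul_pos hl₁ (by linarith)) (mul_pos (by linarith) (by linarith))
    linarith
  -- inner positivity
  have hInnerPos : 0 < inr := by
    rw [← hinr]
    have h1 : 0 < (r - μ + l₀) * (r + l₀) * (βLA - ζ) := mul_pos (mul_pos hp hq) hAz
    have h2 : 0 < (r + l₀) * (1 - ζ) := mul_pos hq (by linarith)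
    have h3 : 0 < σ^2/2 * (ζ * (ζ - 1)) * (βLA - 1) :=
      mul_pos (mul_pos (by positivity) hzz) hA1'
    have h4 : 0 < l₁ * ((r + l₀) * (1 - ζ) + σ^2/2 * (ζ * (ζ - 1)) * (βLA - 1)) :=
      mul_pos hl₁ (by linarith)
    linarith
  -- key identity
  have hkey : Num * (βLA - 1) - βLA * Den = l₀ * (βLA - βLB) * inr := by
    rw [← hNum, ← hDen, ← hinr]
    linear_combination (-(l₀ * l₁ * (βLA - βLB) * (βLA - 1))) * hzq
  have hdiffPos : 0 < Num * (βLA - 1) - βLA * Den := by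
    rw [hkey]
    exact mul_pos (mul_pos hl₀ (by linarith)) hInnerPos
  constructor
  · rw [hxinf]
    have h1 : βLA / (βLA - 1) * Kt = βLA * Kt / (βLA - 1) := by ring
    rw [h1, div_le_div_iff₀ hA1' hDenPos]
    have h4 : 0 < Kt * (Num * (βLA - 1) - βLA * Den) := mul_pos hKt hdiffPos
    linarith [h4]
  · have h1 : 1 ≤ βLA / (βLA - 1) := by
      rw [le_div_iff₀ hA1']; linarith
    have h2 := mul_le_mul_of_nonneg_right h1 hKt.le
    linarith
end

section
/- In the geometric-Brownian-motion case, as λ₀ → ∞: β^L_A(λ₀) → ∞, β^U_A(λ₀) → m − √(m² + 2(η+r)/σ²), β^U_B(λ₀) → −∞, a₀(λ₀) → αη/(r−μ+η), a₁(λ₀) → αη/(r−μ+η), b₀(λ₀) → −αK̃η/(r+η), b₁(λ₀) → −αK̃η/(r+η), and G^U_0(β^U_A(λ₀)) is asymptotically equivalent to η − λ₀, i.e. G^U_0(β^U_A(λ₀))/(η−λ₀) → 1, where G^U_0 itself depends on λ₀ via G^U_0(β) = (1/2)σ²β(β−1) + μβ − (λ₀+r). -/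
open Real Filter

private lemma sqrt_tendsto_atTop' : Tendsto Real.sqrt atTop atTop := by
  rw [tendsto_atTop]
  intro b
  filter_upwards [eventually_ge_atTop (b ^ 2)] with x hx
  calc b ≤ |b| := le_abs_self b
    _ = Real.sqrt (b ^ 2) := (Real.sqrt_sq_eq_abs b).symm
    _ ≤ Real.sqrt x := Real.sqrt_le_sqrt hx

/-- In the GBM case, as `λ₀ → ∞`: `β^L_A(λ₀) → ∞`,
`β^U_A(λ₀) → m - √(m² + 2(η+r)/σ²)`, `β^U_B(λ₀) → -∞`,
`a₀, a₁ → αη/(r-μ+η)`, `b₀, b₁ → -αK̃η/(r+η)`, and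
`G^U_0(β^U_A(λ₀))/(η - λ₀) → 1` (where `G^U_0` itself depends on `λ₀`). -/
theorem asymptotics_lambda0_basic
    (r μ σ l₁ η α Kt : ℝ)
    (hσ : 0 < σ) (hl₁ : 0 < l₁) (hη : 0 < η) (hr : 0 < r) (hrμ : μ < r)
    (hα : 0 < α) (hKt : 0 < Kt)
    (m : ℝ) (hm : m = 1/2 - μ / σ^2)
    (βLA βUA βUB a₀ a₁ b₀ b₁ : ℝ → ℝ)
    (hβLA : ∀ l₀ : ℝ, βLA l₀ = m + Real.sqrt (m^2 + 2 * (l₀ + l₁ + r) / σ^2))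
    (hβUA : ∀ l₀ : ℝ, βUA l₀ = m - Real.sqrt (m^2 +
      (l₀ + l₁ + η + 2 * r - Real.sqrt ((l₀ + l₁ + η)^2 - 4 * l₀ * η)) / σ^2))
    (hβUB : ∀ l₀ : ℝ, βUB l₀ = m - Real.sqrt (m^2 +
      (l₀ + l₁ + η + 2 * r + Real.sqrt ((l₀ + l₁ + η)^2 - 4 * l₀ * η)) / σ^2))
    (ha₀ : ∀ l₀ : ℝ, a₀ l₀ = α * η * l₀ / ((r - μ + l₀) * (r - μ + l₁ + η) - l₀ * l₁))
    (ha₁ : ∀ l₀ : ℝ, a₁ l₀ = α * η * (r - μ + l₀) / ((r - μ + l₀) * (r - μ + l₁ + η) - l₀ * l₁))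
    (hb₀ : ∀ l₀ : ℝ, b₀ l₀ = α * Kt * η * l₀ / (l₀ * l₁ - (r + l₀) * (r + l₁ + η)))
    (hb₁ : ∀ l₀ : ℝ, b₁ l₀ = α * Kt * η * (r + l₀) / (l₀ * l₁ - (r + l₀) * (r + l₁ + η))) :
    Tendsto βLA atTop atTop ∧
    Tendsto βUA atTop (nhds (m - Real.sqrt (m^2 + 2 * (η + r) / σ^2))) ∧
    Tendsto βUB atTop atBot ∧
    Tendsto a₀ atTop (nhds (α * η / (r - μ + η))) ∧
    Tendsto a₁ atTop (nhds (α * η / (r - μ + η))) ∧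
    Tendsto b₀ atTop (nhds (-(α * Kt * η) / (r + η))) ∧
    Tendsto b₁ atTop (nhds (-(α * Kt * η) / (r + η))) ∧
    Tendsto (fun l₀ : ℝ =>
      ((1/2) * σ^2 * βUA l₀ * (βUA l₀ - 1) + μ * βUA l₀ - (l₀ + r)) / (η - l₀))
      atTop (nhds 1) := by
  have hσ2 : (0:ℝ) < σ ^ 2 := by positivity
  have hrm : (0:ℝ) < r - μ := sub_pos.2 hrμ
  have hinv : Tendsto (fun l : ℝ => 1 / l) atTop (nhds 0) := by
    simpa [one_div] using tendsto_inv_atTop_zero (𝕜 := ℝ)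
  -- nonnegativity of the discriminant
  have hDnn : ∀ l : ℝ, 0 ≤ (l + l₁ + η) ^ 2 - 4 * l * η := by
    intro l
    nlinarith [sq_nonneg (l + l₁ - η), mul_pos hl₁ hη]
  -- βLA → ∞
  have hLA : Tendsto βLA atTop atTop := by
    apply Tendsto.congr (fun l => (hβLA l).symm)
    apply tendsto_atTop_add_const_left
    apply sqrt_tendsto_atTop'.comp
    apply tendsto_atTop_add_const_left
    apply Tendsto.atTop_div_const hσ2
    have h1 : Tendsto (fun l : ℝ => l + l₁ + r) atTop atTop :=
      tendsto_atTop_add_const_right _ r (tendsto_atTop_add_const_right _ l₁ tendsto_id)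
    exact h1.const_mul_atTop two_pos
  -- D l / l → 1
  have hDl : Tendsto (fun l : ℝ => Real.sqrt ((l + l₁ + η) ^ 2 - 4 * l * η) / l)
      atTop (nhds 1) := by
    have h2 : Tendsto (fun l : ℝ => (1 + (l₁ + η) * (1 / l)) ^ 2 - 4 * η * (1 / l))
        atTop (nhds ((1 + (l₁ + η) * 0) ^ 2 - 4 * η * 0)) :=
      ((tendsto_const_nhds.add (hinv.const_mul (l₁ + η))).pow 2).sub
        (hinv.const_mul (4 * η))
    have h2' : Tendsto (fun l : ℝ => (1 + (l₁ + η) * (1 / l)) ^ 2 - 4 * η * (1 / l))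
        atTop (nhds 1) := by
      have he : ((1:ℝ) + (l₁ + η) * 0) ^ 2 - 4 * η * 0 = 1 := by ring
      rwa [he] at h2
    have h1 : Tendsto (fun l : ℝ =>
        Real.sqrt ((1 + (l₁ + η) * (1 / l)) ^ 2 - 4 * η * (1 / l))) atTop (nhds 1) := by
      simpa using h2'.sqrt
    apply Tendsto.congr' _ h1
    filter_upwards [eventually_gt_atTop 0] with l hl
    have key : (l + l₁ + η) ^ 2 - 4 * l * η
        = ((1 + (l₁ + η) * (1 / l)) ^ 2 - 4 * η * (1 / l)) * l ^ 2 := by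
      field_simp
      ring
    have hX : 0 ≤ (1 + (l₁ + η) * (1 / l)) ^ 2 - 4 * η * (1 / l) := by
      by_contra hneg
      push_neg at hneg
      have h6 : ((1 + (l₁ + η) * (1 / l)) ^ 2 - 4 * η * (1 / l)) * l ^ 2 < 0 :=
        mul_neg_of_neg_of_pos hneg (by positivity)
      have h7 := hDnn l
      rw [key] at h7
      linarith
    rw [key, Real.sqrt_mul hX, Real.sqrt_sq hl.le, mul_div_assoc,
      div_self hl.ne', mul_one]
  -- key limit for βUA : l + l₁ + η + 2r - D l → 2(η+r)
  have hkey : Tendsto (fun l : ℝ =>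
      l + l₁ + η + 2 * r - Real.sqrt ((l + l₁ + η) ^ 2 - 4 * l * η))
      atTop (nhds (2 * (η + r))) := by
    have hden : Tendsto (fun l : ℝ =>
        1 + (l₁ + η) * (1 / l) + Real.sqrt ((l + l₁ + η) ^ 2 - 4 * l * η) / l)
        atTop (nhds (1 + (l₁ + η) * 0 + 1)) :=
      (tendsto_const_nhds.add (hinv.const_mul (l₁ + η))).add hDl
    have hden2 : Tendsto (fun l : ℝ =>
        1 + (l₁ + η) * (1 / l) + Real.sqrt ((l + l₁ + η) ^ 2 - 4 * l * η) / l)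
        atTop (nhds 2) := by
      have he : (1:ℝ) + (l₁ + η) * 0 + 1 = 2 := by ring
      rwa [he] at hden
    have hq : Tendsto (fun l : ℝ => 4 * η /
        (1 + (l₁ + η) * (1 / l) + Real.sqrt ((l + l₁ + η) ^ 2 - 4 * l * η) / l))
        atTop (nhds (4 * η / 2)) :=
      tendsto_const_nhds.div hden2 two_ne_zero
    have hmain : Tendsto (fun l : ℝ => 2 * r + 4 * η /
        (1 + (l₁ + η) * (1 / l) + Real.sqrt ((l + l₁ + η) ^ 2 - 4 * l * η) / l))
        atTop (nhds (2 * (η + r))) := by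
      have hq2 : Tendsto (fun l : ℝ => 2 * r + 4 * η /
          (1 + (l₁ + η) * (1 / l) + Real.sqrt ((l + l₁ + η) ^ 2 - 4 * l * η) / l))
          atTop (nhds (2 * r + 4 * η / 2)) := tendsto_const_nhds.add hq
      have he : (2:ℝ) * r + 4 * η / 2 = 2 * (η + r) := by ring
      rwa [he] at hq2
    apply Tendsto.congr' _ hmain
    filter_upwards [eventually_gt_atTop 0] with l hl
    set D := Real.sqrt ((l + l₁ + η) ^ 2 - 4 * l * η) with hD
    have hD2 : D ^ 2 = (l + l₁ + η) ^ 2 - 4 * l * η := Real.sq_sqrt (hDnn l)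
    have hDpos : 0 ≤ D := Real.sqrt_nonneg _
    have hs : 0 < l + l₁ + η := by linarith
    have hsum : 0 < l + l₁ + η + D := by linarith
    have h1 : l + l₁ + η - D = 4 * l * η / (l + l₁ + η + D) := by
      rw [eq_div_iff hsum.ne']
      nlinarith [hD2]
    have h2 : (0:ℝ) < 1 + (l₁ + η) * (1 / l) + D / l := by positivity
    have h3 : 4 * l * η / (l + l₁ + η + D) = 4 * η / (1 + (l₁ + η) * (1 / l) + D / l) := by
      rw [div_eq_div_iff hsum.ne' h2.ne']
      field_simp
      ring
    have h4 : l + l₁ + η + 2 * r - D = 2 * r + (l + l₁ + η - D) := by ring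
    rw [h4, h1, h3]
  -- βUA limit
  have hUA : Tendsto βUA atTop (nhds (m - Real.sqrt (m ^ 2 + 2 * (η + r) / σ ^ 2))) := by
    apply Tendsto.congr (fun l => (hβUA l).symm)
    exact ((tendsto_const_nhds.add (hkey.div_const (σ ^ 2))).sqrt).const_sub m
  -- βUB → -∞
  have hUB : Tendsto βUB atTop atBot := by
    have h1 : Tendsto (fun l : ℝ => 2 * m + -βLA l) atTop atBot :=
      tendsto_atBot_add_const_left _ (2 * m) (tendsto_neg_atTop_atBot.comp hLA)
    apply tendsto_atBot_mono _ h1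
    intro l
    rw [hβUB l, hβLA l]
    have hDge : l + l₁ - η ≤ Real.sqrt ((l + l₁ + η) ^ 2 - 4 * l * η) := by
      calc l + l₁ - η ≤ |l + l₁ - η| := le_abs_self _
        _ = Real.sqrt ((l + l₁ - η) ^ 2) := (Real.sqrt_sq_eq_abs _).symm
        _ ≤ Real.sqrt ((l + l₁ + η) ^ 2 - 4 * l * η) := by
            apply Real.sqrt_le_sqrt
            nlinarith [mul_pos hl₁ hη]
    have hmono : Real.sqrt (m ^ 2 + 2 * (l + l₁ + r) / σ ^ 2) ≤
        Real.sqrt (m ^ 2 + (l + l₁ + η + 2 * r +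
          Real.sqrt ((l + l₁ + η) ^ 2 - 4 * l * η)) / σ ^ 2) := by
      apply Real.sqrt_le_sqrt
      gcongr
      linarith
    linarith
  -- a₀ limit
  have hDenA : ∀ l : ℝ, (r - μ + l) * (r - μ + l₁ + η) - l * l₁
      = l * (r - μ + η) + (r - μ) * (r - μ + l₁ + η) := by intro l; ring
  have hrmη : (0:ℝ) < r - μ + η := by linarith
  have hrml : (0:ℝ) < r - μ + l₁ + η := by linarith
  have hdenA : Tendsto (fun l : ℝ => (r - μ + η) + (r - μ) * (r - μ + l₁ + η) * (1 / l))
      atTop (nhds (r - μ + η)) := by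
    have h := tendsto_const_nhds (x := r - μ + η) (f := atTop (α := ℝ)) |>.add
      (hinv.const_mul ((r - μ) * (r - μ + l₁ + η)))
    have he : r - μ + η + (r - μ) * (r - μ + l₁ + η) * 0 = r - μ + η := by ring
    rwa [he] at h
  have ha₀T : Tendsto a₀ atTop (nhds (α * η / (r - μ + η))) := by
    have hmain : Tendsto (fun l : ℝ =>
        α * η / ((r - μ + η) + (r - μ) * (r - μ + l₁ + η) * (1 / l)))
        atTop (nhds (α * η / (r - μ + η))) :=
      tendsto_const_nhds.div hdenA hrmη.ne'
    apply Tendsto.congr' _ hmain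
    filter_upwards [eventually_gt_atTop 0] with l hl
    rw [ha₀ l, hDenA l]
    have hpos : 0 < l * (r - μ + η) + (r - μ) * (r - μ + l₁ + η) := by positivity
    have hp2 : (0:ℝ) < (r - μ + η) + (r - μ) * (r - μ + l₁ + η) * (1 / l) := by positivity
    rw [div_eq_div_iff hp2.ne' hpos.ne']
    field_simp
  have ha₁T : Tendsto a₁ atTop (nhds (α * η / (r - μ + η))) := by
    have hnum : Tendsto (fun l : ℝ => α * η * (1 + (r - μ) * (1 / l)))
        atTop (nhds (α * η * (1 + (r - μ) * 0))) :=
      (tendsto_const_nhds.add (hinv.const_mul (r - μ))).const_mul (α * η)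
    have hnum' : Tendsto (fun l : ℝ => α * η * (1 + (r - μ) * (1 / l)))
        atTop (nhds (α * η)) := by
      have he : α * η * (1 + (r - μ) * 0) = α * η := by ring
      rwa [he] at hnum
    have hmain : Tendsto (fun l : ℝ => α * η * (1 + (r - μ) * (1 / l)) /
        ((r - μ + η) + (r - μ) * (r - μ + l₁ + η) * (1 / l)))
        atTop (nhds (α * η / (r - μ + η))) := hnum'.div hdenA hrmη.ne'
    apply Tendsto.congr' _ hmain
    filter_upwards [eventually_gt_atTop 0] with l hl
    rw [ha₁ l, hDenA l]
    have hpos : 0 < l * (r - μ + η) + (r - μ) * (r - μ + l₁ + η) := by positivity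
    have hp2 : (0:ℝ) < (r - μ + η) + (r - μ) * (r - μ + l₁ + η) * (1 / l) := by positivity
    rw [div_eq_div_iff hp2.ne' hpos.ne']
    field_simp
    ring
  -- b₀, b₁ limits
  have hDenB : ∀ l : ℝ, l * l₁ - (r + l) * (r + l₁ + η)
      = -(l * (r + η) + r * (r + l₁ + η)) := by intro l; ring
  have hrη : (0:ℝ) < r + η := by linarith
  have hrlη : (0:ℝ) < r + l₁ + η := by linarith
  have hdenB : Tendsto (fun l : ℝ => (r + η) + r * (r + l₁ + η) * (1 / l))
      atTop (nhds (r + η)) := by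
    have h := tendsto_const_nhds (x := r + η) (f := atTop (α := ℝ)) |>.add
      (hinv.const_mul (r * (r + l₁ + η)))
    have he : r + η + r * (r + l₁ + η) * 0 = r + η := by ring
    rwa [he] at h
  have hb₀T : Tendsto b₀ atTop (nhds (-(α * Kt * η) / (r + η))) := by
    have hmain : Tendsto (fun l : ℝ =>
        -(α * Kt * η) / ((r + η) + r * (r + l₁ + η) * (1 / l)))
        atTop (nhds (-(α * Kt * η) / (r + η))) :=
      tendsto_const_nhds.div hdenB hrη.ne'
    apply Tendsto.congr' _ hmain
    filter_upwards [eventually_gt_atTop 0] with l hl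
    rw [hb₀ l, hDenB l]
    have hpos : 0 < l * (r + η) + r * (r + l₁ + η) := by positivity
    have hp2 : (0:ℝ) < (r + η) + r * (r + l₁ + η) * (1 / l) := by positivity
    have hneg : -(l * (r + η) + r * (r + l₁ + η)) ≠ 0 := neg_ne_zero.mpr hpos.ne'
    rw [div_eq_div_iff hp2.ne' hneg]
    field_simp
  have hb₁T : Tendsto b₁ atTop (nhds (-(α * Kt * η) / (r + η))) := by
    have hnum : Tendsto (fun l : ℝ => -(α * Kt * η) * (1 + r * (1 / l)))
        atTop (nhds (-(α * Kt * η) * (1 + r * 0))) :=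
      (tendsto_const_nhds.add (hinv.const_mul r)).const_mul (-(α * Kt * η))
    have hnum' : Tendsto (fun l : ℝ => -(α * Kt * η) * (1 + r * (1 / l)))
        atTop (nhds (-(α * Kt * η))) := by
      have he : -(α * Kt * η) * (1 + r * 0) = -(α * Kt * η) := by ring
      rwa [he] at hnum
    have hmain : Tendsto (fun l : ℝ => -(α * Kt * η) * (1 + r * (1 / l)) /
        ((r + η) + r * (r + l₁ + η) * (1 / l)))
        atTop (nhds (-(α * Kt * η) / (r + η))) := hnum'.div hdenB hrη.ne'
    apply Tendsto.congr' _ hmain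
    filter_upwards [eventually_gt_atTop 0] with l hl
    rw [hb₁ l, hDenB l]
    have hpos : 0 < l * (r + η) + r * (r + l₁ + η) := by positivity
    have hp2 : (0:ℝ) < (r + η) + r * (r + l₁ + η) * (1 / l) := by positivity
    have hneg : -(l * (r + η) + r * (r + l₁ + η)) ≠ 0 := neg_ne_zero.mpr hpos.ne'
    rw [div_eq_div_iff hp2.ne' hneg]
    field_simp
    ring
  -- the last limit
  have hG : Tendsto (fun l : ℝ =>
      ((1/2) * σ^2 * βUA l * (βUA l - 1) + μ * βUA l - (l + r)) / (η - l))
      atTop (nhds 1) := by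
    have hnum : Tendsto (fun l : ℝ =>
        (l₁ + η) * (1 / l) - 1 - Real.sqrt ((l + l₁ + η) ^ 2 - 4 * l * η) / l)
        atTop (nhds ((l₁ + η) * 0 - 1 - 1)) :=
      ((hinv.const_mul (l₁ + η)).sub tendsto_const_nhds).sub hDl
    have hnum' : Tendsto (fun l : ℝ =>
        (l₁ + η) * (1 / l) - 1 - Real.sqrt ((l + l₁ + η) ^ 2 - 4 * l * η) / l)
        atTop (nhds (-2)) := by
      have he : (l₁ + η) * 0 - 1 - 1 = (-2 : ℝ) := by ring
      rwa [he] at hnum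
    have hden : Tendsto (fun l : ℝ => 2 * (η * (1 / l) - 1)) atTop
        (nhds (2 * (η * 0 - 1))) :=
      ((hinv.const_mul η).sub tendsto_const_nhds).const_mul 2
    have hden' : Tendsto (fun l : ℝ => 2 * (η * (1 / l) - 1)) atTop (nhds (-2)) := by
      have he : (2:ℝ) * (η * 0 - 1) = -2 := by ring
      rwa [he] at hden
    have hmain : Tendsto (fun l : ℝ =>
        ((l₁ + η) * (1 / l) - 1 - Real.sqrt ((l + l₁ + η) ^ 2 - 4 * l * η) / l) /
          (2 * (η * (1 / l) - 1)))
        atTop (nhds ((-2 : ℝ) / (-2))) := hnum'.div hden' (by norm_num)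
    have h2 : (-2 : ℝ) / (-2) = 1 := by norm_num
    rw [h2] at hmain
    apply Tendsto.congr' _ hmain
    filter_upwards [eventually_gt_atTop 0, eventually_gt_atTop η] with l hl hlη
    set D := Real.sqrt ((l + l₁ + η) ^ 2 - 4 * l * η) with hD
    have hD2 : D ^ 2 = (l + l₁ + η) ^ 2 - 4 * l * η := Real.sq_sqrt (hDnn l)
    have hDpos : 0 ≤ D := Real.sqrt_nonneg _
    have hs : 0 < l + l₁ + η := by linarith
    have hDle : D ≤ l + l₁ + η := by
      rw [hD]
      calc Real.sqrt ((l + l₁ + η) ^ 2 - 4 * l * η) ≤ Real.sqrt ((l + l₁ + η) ^ 2) := by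
            apply Real.sqrt_le_sqrt
            have h4 : (0:ℝ) ≤ 4 * l * η := by positivity
            linarith
        _ = l + l₁ + η := Real.sqrt_sq hs.le
    have hc : 0 ≤ m ^ 2 + (l + l₁ + η + 2 * r - D) / σ ^ 2 := by
      have h1 : 0 ≤ (l + l₁ + η + 2 * r - D) / σ ^ 2 := by
        apply div_nonneg _ hσ2.le
        linarith
      exact add_nonneg (sq_nonneg m) h1
    set S := Real.sqrt (m ^ 2 + (l + l₁ + η + 2 * r - D) / σ ^ 2) with hS
    have hS2 : S ^ 2 = m ^ 2 + (l + l₁ + η + 2 * r - D) / σ ^ 2 := Real.sq_sqrt hc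
    have hS2' : σ ^ 2 * S ^ 2 = σ ^ 2 * m ^ 2 + (l + l₁ + η + 2 * r - D) := by
      rw [hS2, mul_add, mul_div_cancel₀ _ hσ2.ne']
    have hμ : μ = (1/2 - m) * σ ^ 2 := by
      rw [hm]
      field_simp
      ring
    have hGval : (1/2) * σ^2 * βUA l * (βUA l - 1) + μ * βUA l - (l + r)
        = (l₁ + η - l - D) / 2 := by
      rw [hβUA l, hμ, ← hD, ← hS]
      linear_combination (1/2 : ℝ) * hS2'
    rw [hGval, div_div]
    have hηl : η - l < 0 := by linarith
    have hd2 : 2 * (η * (1 / l) - 1) < 0 := by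
      have h5 : η * (1 / l) < 1 := by
        rw [mul_one_div, div_lt_one hl]
        exact hlη
      linarith
    rw [div_eq_div_iff hd2.ne (mul_ne_zero two_ne_zero hηl.ne)]
    field_simp
  exact ⟨hLA, hUA, hUB, ha₀T, ha₁T, hb₀T, hb₁T, hG⟩
end
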